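/- arXiv:1408.1262 — 6 statements merged into one kernel-verified Lean document; each statement's English description precedes it below -/
import Mathlib

section
/- Let V₁ ⊆ ℝ^{d₁} and V₂ ⊆ ℝ^{d₂} be finite point configurations. Then the Theta rank of the product configuration V₁ × V₂ ⊆ ℝ^{d₁+d₂} satisfies Th(V₁ × V₂) = max(Th(V₁), Th(V₂)), and likewise the levelness satisfies Lev(V₁ × V₂) = max(Lev(V₁), Lev(V₂)). -/
open MvPolynomial Set

noncomputable section

/-- `f` is an affine-linear polynomial (degree at most one). -/
def IsAffLin {ι : Type} (f : MvPolynomial ι ℝ) : Prop := f.totalDegree ≤ 1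

/-- `f` is nonnegative on `V`. -/
def NonnegOn {ι : Type} (V : Set (ι → ℝ)) (f : MvPolynomial ι ℝ) : Prop :=
  ∀ v ∈ V, 0 ≤ eval v f

/-- `ℓ` is `k`-sos with respect to `V`: on `V` it agrees with a sum of squares of
polynomials of degree at most `k`. -/
def IsKSos {ι : Type} (V : Set (ι → ℝ)) (k : ℕ) (ℓ : MvPolynomial ι ℝ) : Prop :=
  ∃ (s : ℕ) (h : Fin s → MvPolynomial ι ℝ),
    (∀ i, (h i).totalDegree ≤ k) ∧ ∀ v ∈ V, eval v ℓ = ∑ i, (eval v (h i)) ^ 2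

/-- The Theta rank of a point configuration `V`. -/
def thetaRank {ι : Type} (V : Set (ι → ℝ)) : ℕ :=
  sInf {k | ∀ ℓ, IsAffLin ℓ → NonnegOn V ℓ → IsKSos V k ℓ}

/-- `F` is a face of `V`. -/
def IsFaceOf {ι : Type} (V F : Set (ι → ℝ)) : Prop :=
  ∃ g, IsAffLin g ∧ NonnegOn V g ∧ F = {v ∈ V | eval v g = 0}

/-- `F` is a facet of `V`: an inclusion-maximal proper face. -/
def IsFacetOf {ι : Type} (V F : Set (ι → ℝ)) : Prop :=
  IsFaceOf V F ∧ F ≠ V ∧ ∀ F', IsFaceOf V F' → F' ≠ V → F ⊆ F' → F' = F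

/-- `ℓ` is a facet-defining affine-linear function for `V`. -/
def IsFacetDefining {ι : Type} (V : Set (ι → ℝ)) (ℓ : MvPolynomial ι ℝ) : Prop :=
  IsAffLin ℓ ∧ NonnegOn V ℓ ∧ IsFacetOf V {v ∈ V | eval v ℓ = 0}

/-- The levelness of a point configuration `V`. -/
def levelness {ι : Type} (V : Set (ι → ℝ)) : ℕ :=
  sInf {k | ∀ ℓ, IsFacetDefining V ℓ → ((fun v => eval v ℓ) '' V).ncard ≤ k}

/-- The product configuration of `V₁ ⊆ ℝ^{d₁}` and `V₂ ⊆ ℝ^{d₂}` inside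
`ℝ^{d₁} × ℝ^{d₂} = ℝ^{d₁ + d₂}`, with coordinates indexed by `Fin d₁ ⊕ Fin d₂`. -/
def prodConfig {d₁ d₂ : ℕ} (V₁ : Set (Fin d₁ → ℝ)) (V₂ : Set (Fin d₂ → ℝ)) :
    Set ((Fin d₁ ⊕ Fin d₂) → ℝ) :=
  {x | (fun i => x (Sum.inl i)) ∈ V₁ ∧ (fun j => x (Sum.inr j)) ∈ V₂}

/-!
For affine-linear `ℓ` on `ℝ^{ι₁} × ℝ^{ι₂}` the rectangle rule
`ℓ(x, y) + ℓ(x', y') = ℓ(x, y') + ℓ(x', y)` holds. Choosing `y₀` to minimise `ℓ(x₀, ·)` on `V₂`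
writes a nonnegative `ℓ` on `V₁ × V₂` as `ℓ(x, y₀) + (ℓ(x₀, y) - ℓ(x₀, y₀))`, a sum of nonnegative
affine functions of the two factors, so sos certificates on the factors add up to one on the
product; conversely a certificate on the product restricts to the slices `V₁ × {y₀}` and
`{x₀} × V₂`. For levelness, the same rule shows that the nonempty faces of `V₁ × V₂` are the
products of nonempty faces, so its facets are `F₁ × V₂` and `V₁ × F₂` for facets `F₁`, `F₂` of
the factors, and a function defining `F₁ × V₂` is constant along `V₂`: it takes exactly the values
of its slice, which defines `F₁`. Facets with empty zero set only occur for a single point and have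
one level.
-/

variable {ι κ ι₁ ι₂ : Type}

theorem Finsupp.eq_zero_or_eq_single_one_of_sum_le_one {m : ι →₀ ℕ} (h : (m.sum fun _ e => e) ≤ 1) :
    m = 0 ∨ ∃ i, m = Finsupp.single i 1 := by
  rcases Nat.le_one_iff_eq_zero_or_eq_one.mp h with h | h
  · exact Or.inl ((Finsupp.degree_eq_zero_iff m).mp h)
  · exact Or.inr ((Finsupp.sum_eq_one_iff m).mp h)

theorem IsAffLin.eval_add_eval_eq {f : MvPolynomial ι ℝ} (hf : IsAffLin f) {a b c d : ι → ℝ}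
    (h : a + b = c + d) : eval a f + eval b f = eval c f + eval d f := by
  simp only [eval_eq, ← Finset.sum_add_distrib, ← mul_add]
  refine Finset.sum_congr rfl fun m hm => ?_
  rcases Finsupp.eq_zero_or_eq_single_one_of_sum_le_one ((le_totalDegree hm).trans hf) with rfl | ⟨i, rfl⟩
  · simp
  · simpa using Or.inl (congrFun h i)

theorem IsAffLin.eval_elim_add_eval_elim {ℓ : MvPolynomial (ι₁ ⊕ ι₂) ℝ} (hℓ : IsAffLin ℓ)
    (x x' : ι₁ → ℝ) (y y' : ι₂ → ℝ) :
    eval (Sum.elim x y) ℓ + eval (Sum.elim x' y') ℓ =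
      eval (Sum.elim x y') ℓ + eval (Sum.elim x' y) ℓ :=
  hℓ.eval_add_eval_eq (by ext (i | j) <;> simp [add_comm])

namespace MvPolynomial

theorem totalDegree_aeval_le {R : Type} [CommSemiring R] {g : ι → MvPolynomial κ R}
    (hg : ∀ i, (g i).totalDegree ≤ 1) (p : MvPolynomial ι R) :
    (aeval g p).totalDegree ≤ p.totalDegree := by
  classical
  conv_lhs => rw [p.as_sum, map_sum]
  refine (totalDegree_finsetSum _ _).trans (Finset.sup_le fun m hm => ?_)
  rw [aeval_monomial]
  refine (totalDegree_mul _ _).trans ?_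
  rw [algebraMap_eq, totalDegree_C, zero_add, Finsupp.prod]
  refine (totalDegree_finsetProd _ _).trans (le_trans ?_ (le_totalDegree hm))
  exact Finset.sum_le_sum fun i _ =>
    (totalDegree_pow _ _).trans ((Nat.mul_le_mul_left _ (hg i)).trans (mul_one _).le)

theorem eval_aeval {R : Type} [CommSemiring R] (g : ι → MvPolynomial κ R) (w : κ → R)
    (p : MvPolynomial ι R) :
    eval w (aeval g p) = eval (fun i => eval w (g i)) p := by
  induction p using MvPolynomial.induction_on with
  | C c => simp
  | add p q hp hq => simp only [map_add, hp, hq]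
  | mul_X p i hp => simp only [map_mul, aeval_X, eval_X, hp]

end MvPolynomial

theorem IsAffLin.rename {p : MvPolynomial ι ℝ} (hp : IsAffLin p) (f : ι → κ) :
    IsAffLin (rename f p) :=
  (totalDegree_rename_le f p).trans hp

theorem IsAffLin.add {p q : MvPolynomial ι ℝ} (hp : IsAffLin p) (hq : IsAffLin q) :
    IsAffLin (p + q) :=
  (totalDegree_add p q).trans (max_le hp hq)

theorem IsAffLin.sub_C {p : MvPolynomial ι ℝ} (hp : IsAffLin p) (c : ℝ) : IsAffLin (p - C c) :=
  (totalDegree_sub_C_le p c).trans hp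

def sliceLeft (y₀ : ι₂ → ℝ) : MvPolynomial (ι₁ ⊕ ι₂) ℝ →ₐ[ℝ] MvPolynomial ι₁ ℝ :=
  aeval (Sum.elim X (C ∘ y₀))

def sliceRight (x₀ : ι₁ → ℝ) : MvPolynomial (ι₁ ⊕ ι₂) ℝ →ₐ[ℝ] MvPolynomial ι₂ ℝ :=
  aeval (Sum.elim (C ∘ x₀) X)

theorem eval_sliceLeft (y₀ : ι₂ → ℝ) (p : MvPolynomial (ι₁ ⊕ ι₂) ℝ) (x : ι₁ → ℝ) :
    eval x (sliceLeft y₀ p) = eval (Sum.elim x y₀) p := by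
  rw [sliceLeft, eval_aeval]
  congr with (i | j) <;> simp

theorem eval_sliceRight (x₀ : ι₁ → ℝ) (p : MvPolynomial (ι₁ ⊕ ι₂) ℝ) (y : ι₂ → ℝ) :
    eval y (sliceRight x₀ p) = eval (Sum.elim x₀ y) p := by
  rw [sliceRight, eval_aeval]
  congr with (i | j) <;> simp

theorem totalDegree_sliceLeft_le (y₀ : ι₂ → ℝ) (p : MvPolynomial (ι₁ ⊕ ι₂) ℝ) :
    (sliceLeft y₀ p).totalDegree ≤ p.totalDegree :=
  totalDegree_aeval_le (by rintro (i | j) <;> simp [totalDegree_X]) p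

theorem totalDegree_sliceRight_le (x₀ : ι₁ → ℝ) (p : MvPolynomial (ι₁ ⊕ ι₂) ℝ) :
    (sliceRight x₀ p).totalDegree ≤ p.totalDegree :=
  totalDegree_aeval_le (by rintro (i | j) <;> simp [totalDegree_X]) p

theorem IsAffLin.sliceLeft {p : MvPolynomial (ι₁ ⊕ ι₂) ℝ} (hp : IsAffLin p) (y₀ : ι₂ → ℝ) :
    IsAffLin (sliceLeft y₀ p) :=
  (totalDegree_sliceLeft_le y₀ p).trans hp

theorem IsAffLin.sliceRight {p : MvPolynomial (ι₁ ⊕ ι₂) ℝ} (hp : IsAffLin p) (x₀ : ι₁ → ℝ) :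
    IsAffLin (sliceRight x₀ p) :=
  (totalDegree_sliceRight_le x₀ p).trans hp

theorem sliceLeft_rename_inl (y₀ : ι₂ → ℝ) (p : MvPolynomial ι₁ ℝ) :
    sliceLeft y₀ (rename Sum.inl p) = p := by
  rw [sliceLeft, aeval_rename]
  exact congrFun (congrArg DFunLike.coe (aeval_X_left (R := ℝ))) p

theorem sliceRight_rename_inr (x₀ : ι₁ → ℝ) (p : MvPolynomial ι₂ ℝ) :
    sliceRight x₀ (rename Sum.inr p) = p := by
  rw [sliceRight, aeval_rename]
  exact congrFun (congrArg DFunLike.coe (aeval_X_left (R := ℝ))) p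

def configProd (V₁ : Set (ι₁ → ℝ)) (V₂ : Set (ι₂ → ℝ)) : Set (ι₁ ⊕ ι₂ → ℝ) :=
  {z | z ∘ Sum.inl ∈ V₁ ∧ z ∘ Sum.inr ∈ V₂}

section configProd

variable {V₁ F₁ G₁ : Set (ι₁ → ℝ)} {V₂ F₂ G₂ : Set (ι₂ → ℝ)}

theorem prodConfig_eq_configProd {d₁ d₂ : ℕ} (V₁ : Set (Fin d₁ → ℝ)) (V₂ : Set (Fin d₂ → ℝ)) :
    prodConfig V₁ V₂ = configProd V₁ V₂ :=
  rfl

theorem configProd_eq_preimage (V₁ : Set (ι₁ → ℝ)) (V₂ : Set (ι₂ → ℝ)) :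
    configProd V₁ V₂ = Equiv.sumArrowEquivProdArrow ι₁ ι₂ ℝ ⁻¹' V₁ ×ˢ V₂ :=
  rfl

@[simp]
theorem Sum.elim_mem_configProd {x : ι₁ → ℝ} {y : ι₂ → ℝ} :
    Sum.elim x y ∈ configProd V₁ V₂ ↔ x ∈ V₁ ∧ y ∈ V₂ :=
  Iff.rfl

theorem Sum.exists_eq_elim {α : Type*} (z : ι₁ ⊕ ι₂ → α) : ∃ x y, z = Sum.elim x y :=
  ⟨_, _, (Sum.elim_comp_inl_inr z).symm⟩

theorem Set.Nonempty.configProd (h₁ : V₁.Nonempty) (h₂ : V₂.Nonempty) :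
    (configProd V₁ V₂).Nonempty :=
  let ⟨x, hx⟩ := h₁; let ⟨y, hy⟩ := h₂; ⟨Sum.elim x y, hx, hy⟩

theorem Set.Finite.configProd (h₁ : V₁.Finite) (h₂ : V₂.Finite) : (configProd V₁ V₂).Finite :=
  (h₁.prod h₂).preimage (Equiv.sumArrowEquivProdArrow ι₁ ι₂ ℝ).injective.injOn

theorem configProd_subset_configProd_iff (h₁ : F₁.Nonempty) (h₂ : F₂.Nonempty) :
    configProd F₁ F₂ ⊆ configProd G₁ G₂ ↔ F₁ ⊆ G₁ ∧ F₂ ⊆ G₂ := by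
  rw [configProd_eq_preimage, configProd_eq_preimage, Equiv.preimage_subset,
    prod_subset_prod_iff' (h₁.prod h₂)]

theorem configProd_left_inj (h : V₂.Nonempty) : configProd F₁ V₂ = configProd G₁ V₂ ↔ F₁ = G₁ := by
  rw [configProd_eq_preimage, configProd_eq_preimage,
    (preimage_injective.mpr (Equiv.surjective _)).eq_iff, prod_eq_iff_eq h]

theorem configProd_right_inj (h : V₁.Nonempty) : configProd V₁ F₂ = configProd V₁ G₂ ↔ F₂ = G₂ := by
  rw [configProd_eq_preimage, configProd_eq_preimage,
    (preimage_injective.mpr (Equiv.surjective _)).eq_iff, prod_eq_prod_iff]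
  simp only [h.ne_empty, true_and, false_or, or_iff_left_iff_imp, and_imp]
  rintro rfl rfl
  rfl

end configProd

section Faces

variable {V F : Set (ι → ℝ)}

theorem IsFaceOf.subset (h : IsFaceOf V F) : F ⊆ V := by
  obtain ⟨g, -, -, rfl⟩ := h
  exact sep_subset _ _

theorem isFaceOf_self (V : Set (ι → ℝ)) : IsFaceOf V V :=
  ⟨0, by simp [IsAffLin], fun v _ => by simp, by simp⟩

theorem isFaceOf_empty (V : Set (ι → ℝ)) : IsFaceOf V ∅ :=
  ⟨1, by simp [IsAffLin], fun v _ => by simp, by simp⟩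

variable {V₁ F₁ : Set (ι₁ → ℝ)} {V₂ F₂ : Set (ι₂ → ℝ)}

theorem IsFaceOf.prod (h₁ : IsFaceOf V₁ F₁) (h₂ : IsFaceOf V₂ F₂) :
    IsFaceOf (configProd V₁ V₂) (configProd F₁ F₂) := by
  obtain ⟨g₁, hg₁, hn₁, rfl⟩ := h₁
  obtain ⟨g₂, hg₂, hn₂, rfl⟩ := h₂
  refine ⟨rename Sum.inl g₁ + rename Sum.inr g₂, (hg₁.rename _).add (hg₂.rename _),
    fun z hz => ?_, ?_⟩
  · rw [map_add, eval_rename, eval_rename]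
    exact add_nonneg (hn₁ _ hz.1) (hn₂ _ hz.2)
  · ext z
    obtain ⟨x, y, rfl⟩ := Sum.exists_eq_elim z
    simp only [Sum.elim_mem_configProd, mem_sep_iff, map_add, eval_rename, Sum.elim_comp_inl,
      Sum.elim_comp_inr]
    constructor
    · rintro ⟨⟨hx, hgx⟩, hy, hgy⟩
      exact ⟨⟨hx, hy⟩, by rw [hgx, hgy, add_zero]⟩
    · rintro ⟨⟨hx, hy⟩, hg⟩
      obtain ⟨h₁, h₂⟩ := (add_eq_zero_iff_of_nonneg (hn₁ _ hx) (hn₂ _ hy)).mp hg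
      exact ⟨⟨hx, h₁⟩, hy, h₂⟩

/-- Along a face `{g = 0}` through `(x₀, y₀)`, the rectangle rule
`g(x, y) + g(x₀, y₀) = g(x, y₀) + g(x₀, y)` splits `g = 0` into two conditions. -/
theorem IsFaceOf.exists_eq_configProd {F : Set (ι₁ ⊕ ι₂ → ℝ)}
    (hF : IsFaceOf (configProd V₁ V₂) F) (hne : F.Nonempty) :
    ∃ F₁ F₂, IsFaceOf V₁ F₁ ∧ IsFaceOf V₂ F₂ ∧ F = configProd F₁ F₂ := by
  obtain ⟨g, hg, hnn, rfl⟩ := hF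
  obtain ⟨z₀, hz₀, hgz₀⟩ := hne
  obtain ⟨x₀, y₀, rfl⟩ := Sum.exists_eq_elim z₀
  obtain ⟨hx₀, hy₀⟩ := Sum.elim_mem_configProd.mp hz₀
  have hn₁ : NonnegOn V₁ (sliceLeft y₀ g) := fun x hx => by
    rw [eval_sliceLeft]; exact hnn _ ⟨hx, hy₀⟩
  have hn₂ : NonnegOn V₂ (sliceRight x₀ g) := fun y hy => by
    rw [eval_sliceRight]; exact hnn _ ⟨hx₀, hy⟩
  refine ⟨_, _, ⟨_, hg.sliceLeft y₀, hn₁, rfl⟩, ⟨_, hg.sliceRight x₀, hn₂, rfl⟩, ?_⟩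
  ext z
  obtain ⟨x, y, rfl⟩ := Sum.exists_eq_elim z
  have hsplit := hg.eval_elim_add_eval_elim x x₀ y y₀
  simp only [mem_sep_iff, Sum.elim_mem_configProd, eval_sliceLeft, eval_sliceRight]
  rw [hgz₀, add_zero] at hsplit
  constructor
  · rintro ⟨⟨hx, hy⟩, hg0⟩
    obtain ⟨h₁, h₂⟩ := (add_eq_zero_iff_of_nonneg (hnn (Sum.elim x y₀) ⟨hx, hy₀⟩)
      (hnn (Sum.elim x₀ y) ⟨hx₀, hy⟩)).mp (hsplit.symm.trans hg0)
    exact ⟨⟨hx, h₁⟩, hy, h₂⟩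
  · rintro ⟨⟨hx, h₁⟩, hy, h₂⟩
    exact ⟨⟨hx, hy⟩, by rw [hsplit, h₁, h₂, add_zero]⟩

theorem IsFaceOf.exists_eq_configProd_left {G : Set (ι₁ ⊕ ι₂ → ℝ)}
    (hG : IsFaceOf (configProd V₁ V₂) G) (hF₁ : F₁.Nonempty) (hV₂ : V₂.Nonempty)
    (hsub : configProd F₁ V₂ ⊆ G) : ∃ G₁, IsFaceOf V₁ G₁ ∧ F₁ ⊆ G₁ ∧ G = configProd G₁ V₂ := by
  obtain ⟨G₁, G₂, hG₁, hG₂, rfl⟩ := hG.exists_eq_configProd ((hF₁.configProd hV₂).mono hsub)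
  obtain ⟨hFG, hVG⟩ := (configProd_subset_configProd_iff hF₁ hV₂).mp hsub
  exact ⟨G₁, hG₁, hFG, by rw [hG₂.subset.antisymm hVG]⟩

theorem IsFaceOf.exists_eq_configProd_right {G : Set (ι₁ ⊕ ι₂ → ℝ)}
    (hG : IsFaceOf (configProd V₁ V₂) G) (hV₁ : V₁.Nonempty) (hF₂ : F₂.Nonempty)
    (hsub : configProd V₁ F₂ ⊆ G) : ∃ G₂, IsFaceOf V₂ G₂ ∧ F₂ ⊆ G₂ ∧ G = configProd V₁ G₂ := by
  obtain ⟨G₁, G₂, hG₁, hG₂, rfl⟩ := hG.exists_eq_configProd ((hV₁.configProd hF₂).mono hsub)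
  obtain ⟨hVG, hFG⟩ := (configProd_subset_configProd_iff hV₁ hF₂).mp hsub
  exact ⟨G₂, hG₂, hFG, by rw [hG₁.subset.antisymm hVG]⟩

theorem isFacetOf_configProd_left_iff (hF₁ : F₁.Nonempty) (hV₂ : V₂.Nonempty) :
    IsFacetOf (configProd V₁ V₂) (configProd F₁ V₂) ↔ IsFacetOf V₁ F₁ := by
  constructor
  · rintro ⟨hface, hne, hmax⟩
    obtain ⟨G₁, hG₁, -, hFG⟩ := hface.exists_eq_configProd_left hF₁ hV₂ subset_rfl
    rw [configProd_left_inj hV₂] at hFG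
    refine ⟨hFG ▸ hG₁, fun h => hne (h ▸ rfl), fun G₁ hG₁ hne₁ hsub => ?_⟩
    refine (configProd_left_inj hV₂).mp (hmax _ (hG₁.prod (isFaceOf_self V₂)) ?_ ?_)
    · rwa [Ne, configProd_left_inj hV₂]
    · exact (configProd_subset_configProd_iff hF₁ hV₂).mpr ⟨hsub, subset_rfl⟩
  · rintro ⟨hface, hne, hmax⟩
    refine ⟨hface.prod (isFaceOf_self V₂), by rwa [Ne, configProd_left_inj hV₂], ?_⟩
    intro G hG hne' hsub
    obtain ⟨G₁, hG₁, hFG, rfl⟩ := hG.exists_eq_configProd_left hF₁ hV₂ hsub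
    rw [hmax G₁ hG₁ (fun h => hne' (h ▸ rfl)) hFG]

theorem isFacetOf_configProd_right_iff (hV₁ : V₁.Nonempty) (hF₂ : F₂.Nonempty) :
    IsFacetOf (configProd V₁ V₂) (configProd V₁ F₂) ↔ IsFacetOf V₂ F₂ := by
  constructor
  · rintro ⟨hface, hne, hmax⟩
    obtain ⟨G₂, hG₂, -, hFG⟩ := hface.exists_eq_configProd_right hV₁ hF₂ subset_rfl
    rw [configProd_right_inj hV₁] at hFG
    refine ⟨hFG ▸ hG₂, fun h => hne (h ▸ rfl), fun G₂ hG₂ hne₂ hsub => ?_⟩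
    refine (configProd_right_inj hV₁).mp (hmax _ ((isFaceOf_self V₁).prod hG₂) ?_ ?_)
    · rwa [Ne, configProd_right_inj hV₁]
    · exact (configProd_subset_configProd_iff hV₁ hF₂).mpr ⟨subset_rfl, hsub⟩
  · rintro ⟨hface, hne, hmax⟩
    refine ⟨(isFaceOf_self V₁).prod hface, by rwa [Ne, configProd_right_inj hV₁], ?_⟩
    intro G hG hne' hsub
    obtain ⟨G₂, hG₂, hFG, rfl⟩ := hG.exists_eq_configProd_right hV₁ hF₂ hsub
    rw [hmax G₂ hG₂ (fun h => hne' (h ▸ rfl)) hFG]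

theorem IsFacetOf.eq_configProd {F : Set (ι₁ ⊕ ι₂ → ℝ)} (hF : IsFacetOf (configProd V₁ V₂) F)
    (hne : F.Nonempty) :
    (∃ F₁, F₁.Nonempty ∧ F = configProd F₁ V₂) ∨ (∃ F₂, F₂.Nonempty ∧ F = configProd V₁ F₂) := by
  obtain ⟨F₁, F₂, hF₁, hF₂, rfl⟩ := hF.1.exists_eq_configProd hne
  obtain ⟨z, hz₁, hz₂⟩ := hne
  by_cases hV : F₁ = V₁
  · exact Or.inr ⟨F₂, ⟨_, hz₂⟩, by rw [hV]⟩
  · refine Or.inl ⟨F₁, ⟨_, hz₁⟩, (hF.2.2 _ (hF₁.prod (isFaceOf_self V₂)) ?_ ?_).symm⟩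
    · rwa [Ne, configProd_left_inj ⟨_, hF₂.subset hz₂⟩]
    · exact (configProd_subset_configProd_iff ⟨_, hz₁⟩ ⟨_, hz₂⟩).mpr ⟨subset_rfl, hF₂.subset⟩

end Faces

def IsThetaExact (V : Set (ι → ℝ)) (k : ℕ) : Prop :=
  ∀ ℓ, IsAffLin ℓ → NonnegOn V ℓ → IsKSos V k ℓ

section Theta

variable {V : Set (ι → ℝ)} {k : ℕ} {p q : MvPolynomial ι ℝ}

theorem IsKSos.mono {k' : ℕ} (h : IsKSos V k p) (hk : k ≤ k') : IsKSos V k' p :=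
  let ⟨s, h, hdeg, heq⟩ := h
  ⟨s, h, fun i => (hdeg i).trans hk, heq⟩

theorem IsKSos.congr (h : IsKSos V k p) (hpq : ∀ v ∈ V, eval v p = eval v q) : IsKSos V k q :=
  let ⟨s, h, hdeg, heq⟩ := h
  ⟨s, h, hdeg, fun v hv => (hpq v hv).symm.trans (heq v hv)⟩

theorem IsKSos.add (hp : IsKSos V k p) (hq : IsKSos V k q) : IsKSos V k (p + q) := by
  obtain ⟨s, f, hf, hfp⟩ := hp
  obtain ⟨t, g, hg, hgq⟩ := hq
  refine ⟨s + t, Fin.append f g, Fin.addCases (by simpa using hf) (by simpa using hg),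
    fun v hv => ?_⟩
  rw [Fin.sum_univ_add, map_add, hfp v hv, hgq v hv]
  simp

theorem IsKSos.rename {U : Set (κ → ℝ)} (h : IsKSos V k p) (f : ι → κ)
    (hU : ∀ u ∈ U, u ∘ f ∈ V) : IsKSos U k (rename f p) := by
  obtain ⟨s, g, hg, hgp⟩ := h
  refine ⟨s, fun i => MvPolynomial.rename f (g i),
    fun i => (totalDegree_rename_le f _).trans (hg i), fun u hu => ?_⟩
  simp only [eval_rename, hgp _ (hU u hu)]

theorem IsKSos.sliceLeft {V₁ : Set (ι₁ → ℝ)} {V₂ : Set (ι₂ → ℝ)} {p : MvPolynomial (ι₁ ⊕ ι₂) ℝ}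
    (h : IsKSos (configProd V₁ V₂) k p) {y₀ : ι₂ → ℝ} (hy₀ : y₀ ∈ V₂) :
    IsKSos V₁ k (sliceLeft y₀ p) := by
  obtain ⟨s, g, hg, hgp⟩ := h
  refine ⟨s, fun i => _root_.sliceLeft y₀ (g i),
    fun i => (totalDegree_sliceLeft_le y₀ _).trans (hg i), fun x hx => ?_⟩
  simp only [eval_sliceLeft, hgp (Sum.elim x y₀) ⟨hx, hy₀⟩]

theorem IsKSos.sliceRight {V₁ : Set (ι₁ → ℝ)} {V₂ : Set (ι₂ → ℝ)} {p : MvPolynomial (ι₁ ⊕ ι₂) ℝ}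
    (h : IsKSos (configProd V₁ V₂) k p) {x₀ : ι₁ → ℝ} (hx₀ : x₀ ∈ V₁) :
    IsKSos V₂ k (sliceRight x₀ p) := by
  obtain ⟨s, g, hg, hgp⟩ := h
  refine ⟨s, fun i => _root_.sliceRight x₀ (g i),
    fun i => (totalDegree_sliceRight_le x₀ _).trans (hg i), fun y hy => ?_⟩
  simp only [eval_sliceRight, hgp (Sum.elim x₀ y) ⟨hx₀, hy⟩]

theorem isThetaExact_monotone (V : Set (ι → ℝ)) : Monotone (IsThetaExact V) :=
  fun _ _ hk h ℓ hℓ hnn => (h ℓ hℓ hnn).mono hk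

theorem exists_eval_eq_indicator (hV : V.Finite) (v : ι → ℝ) :
    ∃ p : MvPolynomial ι ℝ, eval v p = 1 ∧ ∀ w ∈ V, w ≠ v → eval w p = 0 := by
  classical
  have hsep : ∀ w, w ≠ v → ∃ q : MvPolynomial ι ℝ, eval v q = 1 ∧ eval w q = 0 := by
    intro w hw
    obtain ⟨i, hi⟩ := Function.ne_iff.mp hw
    exact ⟨C (v i - w i)⁻¹ * (X i - C (w i)), by simp [sub_ne_zero.mpr hi.symm], by simp⟩
  choose! q hq using hsep
  refine ⟨∏ w ∈ hV.toFinset.erase v, q w, ?_, fun u hu huv => ?_⟩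
  · rw [map_prod]
    exact Finset.prod_eq_one fun w hw => (hq w (Finset.ne_of_mem_erase hw)).1
  · rw [map_prod]
    exact Finset.prod_eq_zero (Finset.mem_erase.mpr ⟨huv, hV.mem_toFinset.mpr hu⟩) (hq u huv).2

/-- On a finite set every nonnegative function is the square of an interpolating polynomial. -/
theorem exists_isThetaExact (hV : V.Finite) : ∃ k, IsThetaExact V k := by
  choose δ hδ₁ hδ₀ using exists_eval_eq_indicator hV
  refine ⟨hV.toFinset.sup fun v => (δ v).totalDegree, fun ℓ _ hnn =>
    ⟨1, fun _ => ∑ v ∈ hV.toFinset, C √(eval v ℓ) * δ v, fun _ => ?_, fun u hu => ?_⟩⟩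
  · refine (totalDegree_finsetSum _ _).trans (Finset.sup_mono_fun fun v _ => ?_)
    exact (totalDegree_mul _ _).trans (by rw [totalDegree_C, zero_add])
  · have hu' := hV.mem_toFinset.mpr hu
    rw [Fin.sum_univ_one, map_sum, Finset.sum_eq_single_of_mem u hu' fun v hv hvu => by
      rw [eval_mul, hδ₀ v u hu hvu.symm, mul_zero]]
    rw [eval_mul, eval_C, hδ₁, mul_one, Real.sq_sqrt (hnn u hu)]

variable {V₁ : Set (ι₁ → ℝ)} {V₂ : Set (ι₂ → ℝ)}

theorem IsThetaExact.of_configProd_left (h : IsThetaExact (configProd V₁ V₂) k)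
    (hV₂ : V₂.Nonempty) : IsThetaExact V₁ k := by
  intro ℓ hℓ hnn
  obtain ⟨y₀, hy₀⟩ := hV₂
  have hsos := h (rename Sum.inl ℓ) (hℓ.rename _) fun z hz => by rw [eval_rename]; exact hnn _ hz.1
  simpa only [sliceLeft_rename_inl] using hsos.sliceLeft hy₀

theorem IsThetaExact.of_configProd_right (h : IsThetaExact (configProd V₁ V₂) k)
    (hV₁ : V₁.Nonempty) : IsThetaExact V₂ k := by
  intro ℓ hℓ hnn
  obtain ⟨x₀, hx₀⟩ := hV₁
  have hsos := h (rename Sum.inr ℓ) (hℓ.rename _) fun z hz => by rw [eval_rename]; exact hnn _ hz.2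
  simpa only [sliceRight_rename_inr] using hsos.sliceRight hx₀

theorem IsThetaExact.prod (h₁ : IsThetaExact V₁ k) (h₂ : IsThetaExact V₂ k) (hV₁ : V₁.Nonempty)
    (hV₂ : V₂.Finite) (hV₂ne : V₂.Nonempty) : IsThetaExact (configProd V₁ V₂) k := by
  intro ℓ hℓ hnn
  obtain ⟨x₀, hx₀⟩ := hV₁
  obtain ⟨y₀, hy₀, hmin⟩ := exists_min_image V₂ (fun y => eval y (sliceRight x₀ ℓ)) hV₂ hV₂ne
  have hsos₁ := h₁ (sliceLeft y₀ ℓ) (hℓ.sliceLeft y₀) fun x hx => by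
    rw [eval_sliceLeft]; exact hnn _ ⟨hx, hy₀⟩
  have hsos₂ := h₂ (sliceRight x₀ ℓ - C (eval (Sum.elim x₀ y₀) ℓ)) ((hℓ.sliceRight x₀).sub_C _)
    fun y hy => by simpa [eval_sliceRight] using hmin y hy
  refine ((hsos₁.rename Sum.inl fun z hz => hz.1).add (hsos₂.rename Sum.inr fun z hz => hz.2)).congr
    fun z _ => ?_
  obtain ⟨x, y, rfl⟩ := Sum.exists_eq_elim z
  simp only [map_add, map_sub, eval_rename, eval_C, Sum.elim_comp_inl, Sum.elim_comp_inr,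
    eval_sliceLeft, eval_sliceRight]
  linarith [hℓ.eval_elim_add_eval_elim x x₀ y y₀]

end Theta

def IsKLevel (V : Set (ι → ℝ)) (k : ℕ) : Prop :=
  ∀ ℓ, IsFacetDefining V ℓ → ((fun v => eval v ℓ) '' V).ncard ≤ k

section Level

variable {V : Set (ι → ℝ)} {k : ℕ}

theorem isKLevel_monotone (V : Set (ι → ℝ)) : Monotone (IsKLevel V) :=
  fun _ _ hk h ℓ hℓ => (h ℓ hℓ).trans hk

theorem exists_isKLevel (hV : V.Finite) : ∃ k, IsKLevel V k :=
  ⟨V.ncard, fun _ _ => ncard_image_le hV⟩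

theorem exists_isFacetDefining (hV : V.Finite) (hne : V.Nonempty) : ∃ ℓ, IsFacetDefining V ℓ := by
  obtain ⟨F, ⟨⟨g, hg, hnn, rfl⟩, hFV⟩, hmax⟩ :=
    (hV.finite_subsets.subset fun F (hF : IsFaceOf V F ∧ F ≠ V) => hF.1.subset).exists_maximal
      ⟨∅, isFaceOf_empty V, hne.ne_empty.symm⟩
  exact ⟨g, hg, hnn, ⟨g, hg, hnn, rfl⟩, hFV, fun G hG hGV hsub =>
    (hmax ⟨hG, hGV⟩ hsub).antisymm hsub⟩

/-- The argmin face of `ℓ` is nonempty and contains the facet `∅`, so it is all of `V`. -/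
theorem IsFacetDefining.ncard_image_eq_one {ℓ : MvPolynomial ι ℝ} (hℓ : IsFacetDefining V ℓ)
    (hV : V.Finite) (hne : V.Nonempty) (hempty : {v ∈ V | eval v ℓ = 0} = ∅) :
    ((fun v => eval v ℓ) '' V).ncard = 1 := by
  obtain ⟨hℓ, -, -, -, hmax⟩ := hℓ
  obtain ⟨v₀, hv₀, hmin⟩ := exists_min_image V (fun v => eval v ℓ) hV hne
  set A := {v ∈ V | eval v (ℓ - C (eval v₀ ℓ)) = 0}
  have hA : A = V := by
    by_contra hA
    have hv₀ : v₀ ∈ A := ⟨hv₀, by simp⟩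
    exact (show A.Nonempty from ⟨v₀, hv₀⟩).ne_empty (hempty ▸ hmax A
      ⟨_, hℓ.sub_C _, fun v hv => by simpa using hmin v hv, rfl⟩ hA (hempty ▸ empty_subset A))
  have hconst : ∀ v ∈ V, eval v ℓ = eval v₀ ℓ := fun v hv => by
    simpa [A, sub_eq_zero] using (hA.ge hv).2
  rw [image_congr hconst, hne.image_const, ncard_singleton]

theorem IsKLevel.one_le (h : IsKLevel V k) (hV : V.Finite) (hne : V.Nonempty) : 1 ≤ k := by
  obtain ⟨ℓ, hℓ⟩ := exists_isFacetDefining hV hne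
  exact ((ncard_pos (hV.image _)).mpr (hne.image _)).trans_le (h ℓ hℓ)

theorem isKLevel_of_forall_zeroSet_nonempty (hV : V.Finite) (hne : V.Nonempty) (hk : 1 ≤ k)
    (h : ∀ ℓ, IsFacetDefining V ℓ → {v ∈ V | eval v ℓ = 0}.Nonempty →
      ((fun v => eval v ℓ) '' V).ncard ≤ k) :
    IsKLevel V k := fun ℓ hℓ => by
  rcases eq_empty_or_nonempty {v ∈ V | eval v ℓ = 0} with h0 | h0
  · exact (hℓ.ncard_image_eq_one hV hne h0).trans_le hk
  · exact h ℓ hℓ h0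

variable {V₁ F₁ : Set (ι₁ → ℝ)} {V₂ F₂ : Set (ι₂ → ℝ)} {ℓ : MvPolynomial (ι₁ ⊕ ι₂) ℝ}
  {x₀ : ι₁ → ℝ} {y₀ : ι₂ → ℝ}

theorem zeroSet_sliceLeft (hy₀ : y₀ ∈ V₂)
    (hzero : {z ∈ configProd V₁ V₂ | eval z ℓ = 0} = configProd F₁ V₂) :
    {x ∈ V₁ | eval x (sliceLeft y₀ ℓ) = 0} = F₁ := by
  ext x
  simpa [eval_sliceLeft, hy₀] using Set.ext_iff.mp hzero (Sum.elim x y₀)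

theorem zeroSet_sliceRight (hx₀ : x₀ ∈ V₁)
    (hzero : {z ∈ configProd V₁ V₂ | eval z ℓ = 0} = configProd V₁ F₂) :
    {y ∈ V₂ | eval y (sliceRight x₀ ℓ) = 0} = F₂ := by
  ext y
  simpa [eval_sliceRight, hx₀] using Set.ext_iff.mp hzero (Sum.elim x₀ y)

theorem isFacetDefining_sliceLeft_iff (hℓ : IsAffLin ℓ) (hnn : NonnegOn (configProd V₁ V₂) ℓ)
    (hF₁ : F₁.Nonempty) (hy₀ : y₀ ∈ V₂)
    (hzero : {z ∈ configProd V₁ V₂ | eval z ℓ = 0} = configProd F₁ V₂) :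
    IsFacetDefining V₁ (sliceLeft y₀ ℓ) ↔ IsFacetDefining (configProd V₁ V₂) ℓ := by
  have hnn₁ : NonnegOn V₁ (sliceLeft y₀ ℓ) := fun x hx => by
    rw [eval_sliceLeft]; exact hnn _ ⟨hx, hy₀⟩
  simp only [IsFacetDefining, zeroSet_sliceLeft hy₀ hzero, hzero,
    isFacetOf_configProd_left_iff hF₁ ⟨y₀, hy₀⟩, hℓ, hnn, hℓ.sliceLeft y₀, hnn₁, true_and]

theorem isFacetDefining_sliceRight_iff (hℓ : IsAffLin ℓ) (hnn : NonnegOn (configProd V₁ V₂) ℓ)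
    (hx₀ : x₀ ∈ V₁) (hF₂ : F₂.Nonempty)
    (hzero : {z ∈ configProd V₁ V₂ | eval z ℓ = 0} = configProd V₁ F₂) :
    IsFacetDefining V₂ (sliceRight x₀ ℓ) ↔ IsFacetDefining (configProd V₁ V₂) ℓ := by
  have hnn₂ : NonnegOn V₂ (sliceRight x₀ ℓ) := fun y hy => by
    rw [eval_sliceRight]; exact hnn _ ⟨hx₀, hy⟩
  simp only [IsFacetDefining, zeroSet_sliceRight hx₀ hzero, hzero,
    isFacetOf_configProd_right_iff ⟨x₀, hx₀⟩ hF₂, hℓ, hnn, hℓ.sliceRight x₀, hnn₂, true_and]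

/-- `ℓ` vanishes on `{x'} × V₂` for any `x' ∈ F₁`, so by the rectangle rule it does not depend on
the second factor. -/
theorem image_eval_sliceLeft (hℓ : IsAffLin ℓ) (hF₁ : F₁.Nonempty) (hy₀ : y₀ ∈ V₂)
    (hzero : {z ∈ configProd V₁ V₂ | eval z ℓ = 0} = configProd F₁ V₂) :
    (fun z => eval z ℓ) '' configProd V₁ V₂ = (fun x => eval x (sliceLeft y₀ ℓ)) '' V₁ := by
  obtain ⟨x', hx'⟩ := hF₁
  have hvanish : ∀ y ∈ V₂, eval (Sum.elim x' y) ℓ = 0 := fun y hy =>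
    ((Set.ext_iff.mp hzero (Sum.elim x' y)).mpr ⟨hx', hy⟩).2
  ext r
  constructor
  · rintro ⟨z, hz, rfl⟩
    obtain ⟨x, y, rfl⟩ := Sum.exists_eq_elim z
    refine ⟨x, hz.1, ?_⟩
    dsimp only
    rw [eval_sliceLeft]
    linarith [hℓ.eval_elim_add_eval_elim x x' y y₀, hvanish y hz.2, hvanish y₀ hy₀]
  · rintro ⟨x, hx, rfl⟩
    exact ⟨Sum.elim x y₀, ⟨hx, hy₀⟩, (eval_sliceLeft y₀ ℓ x).symm⟩

theorem image_eval_sliceRight (hℓ : IsAffLin ℓ) (hx₀ : x₀ ∈ V₁) (hF₂ : F₂.Nonempty)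
    (hzero : {z ∈ configProd V₁ V₂ | eval z ℓ = 0} = configProd V₁ F₂) :
    (fun z => eval z ℓ) '' configProd V₁ V₂ = (fun y => eval y (sliceRight x₀ ℓ)) '' V₂ := by
  obtain ⟨y', hy'⟩ := hF₂
  have hvanish : ∀ x ∈ V₁, eval (Sum.elim x y') ℓ = 0 := fun x hx =>
    ((Set.ext_iff.mp hzero (Sum.elim x y')).mpr ⟨hx, hy'⟩).2
  ext r
  constructor
  · rintro ⟨z, hz, rfl⟩
    obtain ⟨x, y, rfl⟩ := Sum.exists_eq_elim z
    refine ⟨y, hz.2, ?_⟩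
    dsimp only
    rw [eval_sliceRight]
    linarith [hℓ.eval_elim_add_eval_elim x x₀ y y', hvanish x hz.1, hvanish x₀ hx₀]
  · rintro ⟨y, hy, rfl⟩
    exact ⟨Sum.elim x₀ y, ⟨hx₀, hy⟩, (eval_sliceRight x₀ ℓ y).symm⟩

theorem IsKLevel.of_configProd_left (h : IsKLevel (configProd V₁ V₂) k) (hV₁ : V₁.Finite)
    (hV₂ : V₂.Finite) (hne₁ : V₁.Nonempty) (hne₂ : V₂.Nonempty) : IsKLevel V₁ k := by
  refine isKLevel_of_forall_zeroSet_nonempty hV₁ hne₁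
    (h.one_le (hV₁.configProd hV₂) (hne₁.configProd hne₂)) fun ℓ₁ hℓ₁ hF => ?_
  obtain ⟨y₀, hy₀⟩ := hne₂
  have hzero : {z ∈ configProd V₁ V₂ | eval z (rename Sum.inl ℓ₁) = 0} =
      configProd {x ∈ V₁ | eval x ℓ₁ = 0} V₂ := by
    ext z
    obtain ⟨x, y, rfl⟩ := Sum.exists_eq_elim z
    simp only [mem_sep_iff, Sum.elim_mem_configProd, eval_rename, Sum.elim_comp_inl]
    tauto
  have hnn : NonnegOn (configProd V₁ V₂) (rename Sum.inl ℓ₁) := fun z hz => by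
    rw [eval_rename]; exact hℓ₁.2.1 _ hz.1
  have hℓ := (isFacetDefining_sliceLeft_iff (hℓ₁.1.rename _) hnn hF hy₀ hzero).mp
    ((sliceLeft_rename_inl y₀ ℓ₁).symm ▸ hℓ₁)
  have himage := image_eval_sliceLeft (hℓ₁.1.rename _) hF hy₀ hzero
  rw [sliceLeft_rename_inl] at himage
  exact himage ▸ h _ hℓ

theorem IsKLevel.of_configProd_right (h : IsKLevel (configProd V₁ V₂) k) (hV₁ : V₁.Finite)
    (hV₂ : V₂.Finite) (hne₁ : V₁.Nonempty) (hne₂ : V₂.Nonempty) : IsKLevel V₂ k := by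
  refine isKLevel_of_forall_zeroSet_nonempty hV₂ hne₂
    (h.one_le (hV₁.configProd hV₂) (hne₁.configProd hne₂)) fun ℓ₂ hℓ₂ hF => ?_
  obtain ⟨x₀, hx₀⟩ := hne₁
  have hzero : {z ∈ configProd V₁ V₂ | eval z (rename Sum.inr ℓ₂) = 0} =
      configProd V₁ {y ∈ V₂ | eval y ℓ₂ = 0} := by
    ext z
    obtain ⟨x, y, rfl⟩ := Sum.exists_eq_elim z
    simp only [mem_sep_iff, Sum.elim_mem_configProd, eval_rename, Sum.elim_comp_inr]
    tauto
  have hnn : NonnegOn (configProd V₁ V₂) (rename Sum.inr ℓ₂) := fun z hz => by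
    rw [eval_rename]; exact hℓ₂.2.1 _ hz.2
  have hℓ := (isFacetDefining_sliceRight_iff (hℓ₂.1.rename _) hnn hx₀ hF hzero).mp
    ((sliceRight_rename_inr x₀ ℓ₂).symm ▸ hℓ₂)
  have himage := image_eval_sliceRight (hℓ₂.1.rename _) hx₀ hF hzero
  rw [sliceRight_rename_inr] at himage
  exact himage ▸ h _ hℓ

theorem IsKLevel.prod (h₁ : IsKLevel V₁ k) (h₂ : IsKLevel V₂ k) (hV₁ : V₁.Finite)
    (hV₂ : V₂.Finite) (hne₁ : V₁.Nonempty) (hne₂ : V₂.Nonempty) :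
    IsKLevel (configProd V₁ V₂) k := by
  refine isKLevel_of_forall_zeroSet_nonempty (hV₁.configProd hV₂) (hne₁.configProd hne₂)
    (h₁.one_le hV₁ hne₁) fun ℓ hℓ hF => ?_
  obtain ⟨x₀, hx₀⟩ := hne₁
  obtain ⟨y₀, hy₀⟩ := hne₂
  rcases hℓ.2.2.eq_configProd hF with ⟨F₁, hF₁, hzero⟩ | ⟨F₂, hF₂, hzero⟩
  · rw [image_eval_sliceLeft hℓ.1 hF₁ hy₀ hzero]
    exact h₁ _ ((isFacetDefining_sliceLeft_iff hℓ.1 hℓ.2.1 hF₁ hy₀ hzero).mpr hℓ)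
  · rw [image_eval_sliceRight hℓ.1 hx₀ hF₂ hzero]
    exact h₂ _ ((isFacetDefining_sliceRight_iff hℓ.1 hℓ.2.1 hx₀ hF₂ hzero).mpr hℓ)

end Level

theorem Nat.sInf_setOf_and_eq_max {p q : ℕ → Prop} (hp : Monotone p) (hq : Monotone q)
    (hp' : ∃ k, p k) (hq' : ∃ k, q k) :
    sInf {k | p k ∧ q k} = max (sInf {k | p k}) (sInf {k | q k}) := by
  have hmax : max (sInf {k | p k}) (sInf {k | q k}) ∈ {k | p k ∧ q k} :=
    ⟨hp (le_max_left _ _) (Nat.sInf_mem hp'), hq (le_max_right _ _) (Nat.sInf_mem hq')⟩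
  refine le_antisymm (Nat.sInf_le hmax) ?_
  obtain ⟨hpk, hqk⟩ := Nat.sInf_mem ⟨_, hmax⟩
  exact max_le (Nat.sInf_le hpk) (Nat.sInf_le hqk)

section Prod

variable {V₁ : Set (ι₁ → ℝ)} {V₂ : Set (ι₂ → ℝ)}

theorem thetaRank_configProd (hV₁ : V₁.Finite) (hV₂ : V₂.Finite) (hne₁ : V₁.Nonempty)
    (hne₂ : V₂.Nonempty) : thetaRank (configProd V₁ V₂) = max (thetaRank V₁) (thetaRank V₂) := by
  have hexact : ∀ k, IsThetaExact (configProd V₁ V₂) k ↔ IsThetaExact V₁ k ∧ IsThetaExact V₂ k :=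
    fun k => ⟨fun h => ⟨h.of_configProd_left hne₂, h.of_configProd_right hne₁⟩,
      fun h => h.1.prod h.2 hne₁ hV₂ hne₂⟩
  show sInf {k | IsThetaExact _ k} = max (sInf {k | IsThetaExact _ k}) (sInf {k | IsThetaExact _ k})
  simp only [hexact]
  exact Nat.sInf_setOf_and_eq_max (isThetaExact_monotone V₁) (isThetaExact_monotone V₂)
    (exists_isThetaExact hV₁) (exists_isThetaExact hV₂)

theorem levelness_configProd (hV₁ : V₁.Finite) (hV₂ : V₂.Finite) (hne₁ : V₁.Nonempty)
    (hne₂ : V₂.Nonempty) : levelness (configProd V₁ V₂) = max (levelness V₁) (levelness V₂) := by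
  have hlevel : ∀ k, IsKLevel (configProd V₁ V₂) k ↔ IsKLevel V₁ k ∧ IsKLevel V₂ k :=
    fun k => ⟨fun h => ⟨h.of_configProd_left hV₁ hV₂ hne₁ hne₂,
      h.of_configProd_right hV₁ hV₂ hne₁ hne₂⟩, fun h => h.1.prod h.2 hV₁ hV₂ hne₁ hne₂⟩
  show sInf {k | IsKLevel _ k} = max (sInf {k | IsKLevel _ k}) (sInf {k | IsKLevel _ k})
  simp only [hlevel]
  exact Nat.sInf_setOf_and_eq_max (isKLevel_monotone V₁) (isKLevel_monotone V₂)
    (exists_isKLevel hV₁) (exists_isKLevel hV₂)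

end Prod

/-- For finite (nonempty) point configurations `V₁ ⊆ ℝ^{d₁}` and
`V₂ ⊆ ℝ^{d₂}`, the Theta rank of the product configuration satisfies
`Th(V₁ × V₂) = max (Th V₁) (Th V₂)`, and likewise for the levelness. -/
theorem theta_levelness_of_prod {d₁ d₂ : ℕ}
    (V₁ : Set (Fin d₁ → ℝ)) (V₂ : Set (Fin d₂ → ℝ))
    (hV₁fin : V₁.Finite) (hV₂fin : V₂.Finite)
    (hV₁ne : V₁.Nonempty) (hV₂ne : V₂.Nonempty) :
    thetaRank (prodConfig V₁ V₂) = max (thetaRank V₁) (thetaRank V₂) ∧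
      levelness (prodConfig V₁ V₂) = max (levelness V₁) (levelness V₂) := by
  rw [prodConfig_eq_configProd]
  exact ⟨thetaRank_configProd hV₁fin hV₂fin hV₁ne hV₂ne,
    levelness_configProd hV₁fin hV₂fin hV₁ne hV₂ne⟩
end
end

section
/- Let V′ = {0,1}ⁿ ∖ {0} ⊆ ℝⁿ be the set of all 0/1-vectors except the origin, and let f ∈ ℝ[x₁,…,xₙ] be a polynomial that vanishes at every point of V′ and satisfies f(0) ≠ 0. Then deg f ≥ n. -/
open MvPolynomial

/-- If a polynomial `f ∈ ℝ[x₁,…,xₙ]` vanishes at every 0/1-vector except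
the origin, but does not vanish at the origin, then `deg f ≥ n`. -/
theorem totalDegree_ge_of_vanishing_on_cube_minus_origin {n : ℕ}
    (f : MvPolynomial (Fin n) ℝ)
    (hvan : ∀ x : Fin n → ℝ, (∀ i, x i = 0 ∨ x i = 1) → x ≠ 0 → eval x f = 0)
    (h0 : eval (0 : Fin n → ℝ) f ≠ 0) :
    n ≤ f.totalDegree := by
  by_contra hlt
  push_neg at hlt
  set vec : (Fin n → Bool) → (Fin n → ℝ) := fun x i => if x i then 1 else 0 with hvec
  have key : (∑ x : Fin n → Bool, (∏ i, (if x i then (-1:ℝ) else 1)) * eval (vec x) f)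
      = eval 0 f := by
    rw [Finset.sum_eq_single (fun _ => false)]
    · simp [hvec]
    · intro x _ hx
      have hne : vec x ≠ 0 := by
        intro h
        apply hx
        funext i
        have := congrFun h i
        simp [hvec] at this
        simp [this]
      rw [hvan (vec x) (fun i => by by_cases h : x i <;> simp [hvec, h]) hne, mul_zero]
    · simp
  have key2 : (∑ x : Fin n → Bool, (∏ i, (if x i then (-1:ℝ) else 1)) * eval (vec x) f) = 0 := by
    have : ∀ x : Fin n → Bool,
        (∏ i, (if x i then (-1:ℝ) else 1)) * eval (vec x) f
        = ∑ d ∈ f.support, coeff d f * ∏ i, ((if x i then (-1:ℝ) else 1) * (vec x i) ^ d i) := by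
      intro x
      rw [eval_eq', Finset.mul_sum]
      refine Finset.sum_congr rfl fun d _ => ?_
      rw [Finset.prod_mul_distrib]
      ring
    rw [Finset.sum_congr rfl fun x _ => this x, Finset.sum_comm]
    refine Finset.sum_eq_zero fun d hd => ?_
    have hdeg : ∑ i, d i < n := by
      calc ∑ i, d i = d.sum fun _ e => e := by
              rw [Finsupp.sum_fintype]; simp
        _ ≤ f.totalDegree := MvPolynomial.le_totalDegree hd
        _ < n := hlt
    have hex : ∃ i, d i = 0 := by
      by_contra hall
      push_neg at hall
      have : ∀ i, 1 ≤ d i := fun i => Nat.one_le_iff_ne_zero.mpr (hall i)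
      have := Finset.sum_le_sum (fun i (_ : i ∈ Finset.univ) => this i)
      simp at this
      omega
    obtain ⟨j, hj⟩ := hex
    rw [← Finset.mul_sum]
    have : (∑ x : Fin n → Bool, ∏ i, ((if x i then (-1:ℝ) else 1) * (vec x i) ^ d i)) = 0 := by
      simp only [hvec]
      rw [← Fintype.prod_sum fun i (b : Bool) =>
        (if b = true then (-1:ℝ) else 1) * (if b = true then (1:ℝ) else 0) ^ d i]
      refine Finset.prod_eq_zero (Finset.mem_univ j) ?_
      simp [Fintype.sum_bool, hj]
    rw [this, mul_zero]
  rw [key2] at key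
  exact h0 key.symm
end

section
/- Let M = (E, 𝓑) be a matroid on a finite ground set E. Then the smallest affine subspace of ℝ^E containing the base configuration V_M has dimension |E| − c(M), where c(M) is the number of connected components of M. -/
open MvPolynomial Set

noncomputable section

/-- The base configuration of a matroid: the 0/1 indicator vectors of its bases. -/
def baseConfig {α : Type} (M : Matroid α) : Set (α → ℝ) :=
  {x | ∃ B, M.IsBase B ∧ x = Set.indicator B 1}

/-- A circuit of a matroid: an inclusion-minimal dependent set. -/
def IsCircuit {α : Type} (M : Matroid α) (C : Set α) : Prop :=
  M.Dep C ∧ ∀ D, D ⊂ C → ¬ M.Dep D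

/-- Two elements are related if they are equal or lie in a common circuit. -/
def ConnRel {α : Type} (M : Matroid α) (e f : α) : Prop :=
  e = f ∨ ∃ C, IsCircuit M C ∧ e ∈ C ∧ f ∈ C

/-- The number of connected components of a matroid: the number of equivalence
classes of ground set elements under the relation `ConnRel`. -/
def numComponents {α : Type} (M : Matroid α) : ℕ :=
  {S : Set α | ∃ e ∈ M.E, S = {f | ConnRel M e f}}.ncard

/-! The direction of the affine span of `V_M` is spanned by the differences `χ_B - χ_B'` of bases.
Walking from `B` to `B'` by basis exchanges writes such a difference as a sum of vectors
`χ_e - χ_f` with `B - e + f` a base, and these exchangeable pairs `e, f` are exactly the pairs lying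
in a common circuit, namely the fundamental circuit of `f` with respect to `B`. Since lying in a
common circuit is transitive, the direction is spanned by the `χ_e - χ_f` with `e, f` in the same
component, and on a component with `m` elements these vectors span a space of dimension `m - 1`. -/

namespace Setoid

open Submodule

variable {K α : Type*} [Field K] (r : Setoid α)

def representatives : Set α := range (Quotient.out : Quotient r → α)

lemma setOf_rel_eq_iff {e e' : α} : {f | r e f} = {f | r e' f} ↔ r e e' :=
  ⟨fun h => (h.symm ▸ r.refl e' : e' ∈ {f | r e f}),
    fun h => Set.ext fun _ => ⟨r.trans (r.symm h), r.trans h⟩⟩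

variable {r}

lemma out_mk_of_mem_representatives {e : α} (he : e ∈ r.representatives) :
    (Quotient.mk r e).out = e := by
  obtain ⟨q, rfl⟩ := he
  rw [Quotient.out_eq]

variable {s : Set α}

lemma classes_eq_image_representatives (hs : ∀ e ∈ s, ∀ f, r e f → f ∈ s) :
    {S | ∃ e ∈ s, S = {f | r e f}} = (fun e => {f | r e f}) '' (s ∩ r.representatives) := by
  ext S
  constructor
  · rintro ⟨e, he, rfl⟩
    have hout : r e (Quotient.mk r e).out := r.symm (Quotient.mk_out e)
    exact ⟨_, ⟨hs e he _ hout, mem_range_self _⟩, (setOf_rel_eq_iff r).2 (r.symm hout)⟩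
  · rintro ⟨e, ⟨he, -⟩, rfl⟩
    exact ⟨e, he, rfl⟩

lemma ncard_sdiff_representatives_add_ncard_classes [Finite α]
    (hs : ∀ e ∈ s, ∀ f, r e f → f ∈ s) :
    (s \ r.representatives).ncard + {S | ∃ e ∈ s, S = {f | r e f}}.ncard = s.ncard := by
  have hinj : InjOn (fun e => {f | r e f}) (s ∩ r.representatives) := by
    intro e he e' he' h
    rw [← out_mk_of_mem_representatives he.2, ← out_mk_of_mem_representatives he'.2,
      Quotient.sound ((setOf_rel_eq_iff r).1 h)]
  rw [classes_eq_image_representatives hs, hinj.ncard_image, add_comm,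
    ncard_inter_add_ncard_sdiff_eq_ncard]

variable [DecidableEq α]

variable (K r s) in
def classDiffs : Set (α → K) :=
  {x | ∃ e ∈ s, ∃ f, r e f ∧ x = Pi.single e 1 - Pi.single f 1}

variable (K r) in
def diffToRepresentative (e : α) : α → K :=
  Pi.single e 1 - Pi.single (Quotient.mk r e).out 1

-- Restricted to the coordinates in `t`, these vectors are the standard basis vectors.
lemma linearIndependent_diffToRepresentative {t : Set α} (ht : Disjoint t r.representatives) :
    LinearIndependent K (fun e : t => diffToRepresentative K r e) := by
  refine LinearIndependent.of_comp (LinearMap.funLeft K K ((↑) : t → α)) ?_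
  convert Pi.linearIndependent_single_one t K using 1
  ext e a
  have ha : (Quotient.mk r e.1).out ≠ a :=
    fun h => ht.ne_of_mem a.2 (mem_range_self _) h.symm
  simp [diffToRepresentative, LinearMap.funLeft, Pi.single_apply, ha, Subtype.ext_iff]

lemma span_classDiffs_eq (hs : ∀ e ∈ s, ∀ f, r e f → f ∈ s) :
    span K (classDiffs K r s) =
      span K (range fun e : ↥(s \ r.representatives) => diffToRepresentative K r e) := by
  set V := span K (range fun e : ↥(s \ r.representatives) => diffToRepresentative K r e)
  have hmem : ∀ e ∈ s, diffToRepresentative K r e ∈ V := by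
    intro e he
    by_cases hrep : e ∈ r.representatives
    · rw [diffToRepresentative, out_mk_of_mem_representatives hrep, sub_self]
      exact V.zero_mem
    · exact subset_span ⟨⟨e, he, hrep⟩, rfl⟩
  refine le_antisymm (span_le.2 ?_) (span_le.2 ?_)
  · rintro _ ⟨e, he, f, hef, rfl⟩
    have h := V.sub_mem (hmem e he) (hmem f (hs e he f hef))
    rwa [diffToRepresentative, diffToRepresentative, Quotient.sound hef,
      sub_sub_sub_cancel_right] at h
  · rintro _ ⟨⟨e, he, -⟩, rfl⟩
    exact subset_span ⟨e, he, _, r.symm (Quotient.mk_out e), rfl⟩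

theorem finrank_span_classDiffs [Finite α] (hs : ∀ e ∈ s, ∀ f, r e f → f ∈ s) :
    Module.finrank K (span K (classDiffs K r s)) =
      s.ncard - {S | ∃ e ∈ s, S = {f | r e f}}.ncard := by
  have := Fintype.ofFinite ↥(s \ r.representatives)
  rw [span_classDiffs_eq hs, finrank_span_eq_card (linearIndependent_diffToRepresentative
    disjoint_sdiff_left), Fintype.card_eq_nat_card, Nat.card_coe_set_eq,
    ← ncard_sdiff_representatives_add_ncard_classes hs, Nat.add_sub_cancel]

end Setoid

namespace Matroid

variable {α : Type*} {M : Matroid α} {B C₁ C₂ : Set α} {e f g : α}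

theorem IsCircuit.exists_isCircuit_mem_mem [M.Finitary] (hC₁ : M.IsCircuit C₁)
    (hC₂ : M.IsCircuit C₂) (hC₁₂ : (C₁ ∩ C₂).Nonempty) (he : e ∈ C₁) (hg : g ∈ C₂) :
    ∃ C, M.IsCircuit C ∧ e ∈ C ∧ g ∈ C := by
  induction hn : (C₁ ∪ C₂).ncard using Nat.strong_induction_on generalizing C₁ C₂ with
  | _ n ih =>
  by_cases heC₂ : e ∈ C₂
  · exact ⟨C₂, hC₂, heC₂, hg⟩
  obtain ⟨h, hhC₁, hhC₂⟩ := hC₁₂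
  obtain ⟨C₃, hC₃ss, hC₃, heC₃⟩ := hC₁.strong_elimination hC₂ hhC₁ hhC₂ he heC₂
  by_cases hgC₃ : g ∈ C₃
  · exact ⟨C₃, hC₃, heC₃, hgC₃⟩
  obtain ⟨k, hkC₃, hkC₁⟩ : ∃ k ∈ C₃, k ∉ C₁ := not_subset.1 fun hss =>
    (hC₃ss (hC₃.eq_of_subset_isCircuit hC₁ hss ▸ hhC₁)).2 rfl
  have hkC₂ : k ∈ C₂ := (hC₃ss hkC₃).1.resolve_left hkC₁
  obtain ⟨C₄, hC₄ss, hC₄, hgC₄⟩ := hC₂.strong_elimination hC₃ hkC₂ hkC₃ hg hgC₃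
  have hC₄C₁₂ : C₄ ⊆ C₁ ∪ C₂ := fun x hx => (hC₄ss hx).1.elim Or.inr fun hx₃ => (hC₃ss hx₃).1
  have hC₁₄ : (C₁ ∩ C₄).Nonempty := by
    by_contra hdisj
    have hC₄C₂ : C₄ ⊆ C₂ := fun x hx =>
      (hC₄C₁₂ hx).resolve_left fun hx₁ => hdisj ⟨x, hx₁, hx⟩
    exact (hC₄ss (hC₄.eq_of_subset_isCircuit hC₂ hC₄C₂ ▸ hkC₂)).2 rfl
  -- `k` witnesses that `C₁ ∪ C₄` is strictly smaller than `C₁ ∪ C₂`.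
  have hlt : (C₁ ∪ C₄).ncard < n := hn ▸ ncard_lt_ncard
    (ssubset_of_subset_not_subset (union_subset subset_union_left hC₄C₁₂)
      fun hss => (hss (Or.inr hkC₂)).elim hkC₁ fun hk => (hC₄ss hk).2 rfl)
    (hC₁.finite.union hC₂.finite)
  exact ih _ hlt hC₁ hC₄ hC₁₄ he hgC₄ rfl

theorem IsBase.mem_fundCircuit_iff_exchange_isBase (hB : M.IsBase B) (he : e ∈ B)
    (hfE : f ∈ M.E) (hfB : f ∉ B) :
    e ∈ M.fundCircuit f B ↔ M.IsBase (insert f (B \ {e})) := by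
  have hfe : f ≠ e := fun h => hfB (h ▸ he)
  rw [hB.indep.mem_fundCircuit_iff (by rwa [hB.closure_eq]) hfB,
    ← insert_sdiff_singleton_comm hfe]
  exact ⟨hB.exchange_isBase_of_indep hfB, IsBase.indep⟩

theorem exists_isCircuit_mem_mem_iff_exists_isBase_exchange (hef : e ≠ f) :
    (∃ C, M.IsCircuit C ∧ e ∈ C ∧ f ∈ C) ↔
      ∃ B, M.IsBase B ∧ e ∈ B ∧ f ∉ B ∧ M.IsBase (insert f (B \ {e})) := by
  constructor
  · rintro ⟨C, hC, heC, hfC⟩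
    obtain ⟨B, hB, hCB⟩ := (hC.sdiff_singleton_indep hfC).exists_isBase_superset
    have hCfB : C ⊆ insert f B := fun x hx =>
      (eq_or_ne x f).elim Or.inl fun hxf => Or.inr (hCB ⟨hx, hxf⟩)
    have hfB : f ∉ B := fun hfB =>
      hC.not_indep (hB.indep.subset (hCfB.trans (insert_subset hfB subset_rfl)))
    have heB : e ∈ B := hCB ⟨heC, hef⟩
    refine ⟨B, hB, heB, hfB, ?_⟩
    rw [← hB.mem_fundCircuit_iff_exchange_isBase heB (hC.subset_ground hfC) hfB,
      ← hC.eq_fundCircuit_of_subset hB.indep hCfB]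
    exact heC
  · rintro ⟨B, hB, heB, hfB, hB'⟩
    have hfE : f ∈ M.E := hB'.subset_ground (mem_insert f _)
    exact ⟨M.fundCircuit f B, hB.fundCircuit_isCircuit hfE hfB,
      (hB.mem_fundCircuit_iff_exchange_isBase heB hfE hfB).2 hB', M.mem_fundCircuit f B⟩

end Matroid

section Connectivity

open Submodule

variable {α : Type} {M : Matroid α} {B B' C : Set α} {e f : α}

lemma isCircuit_iff_isCircuit : IsCircuit M C ↔ M.IsCircuit C := by
  rw [Matroid.IsCircuit, minimal_iff_forall_ssubset]
  rfl

lemma connRel_iff : ConnRel M e f ↔ e = f ∨ ∃ C, M.IsCircuit C ∧ e ∈ C ∧ f ∈ C := by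
  simp only [ConnRel, isCircuit_iff_isCircuit]

lemma ConnRel.mem_ground (h : ConnRel M e f) (he : e ∈ M.E) : f ∈ M.E := by
  obtain rfl | ⟨C, hC, -, hfC⟩ := connRel_iff.1 h
  exacts [he, hC.subset_ground hfC]

lemma connRel_equivalence [M.Finitary] : Equivalence (ConnRel M) where
  refl _ := connRel_iff.2 (Or.inl rfl)
  symm h := by
    obtain rfl | ⟨C, hC, heC, hfC⟩ := connRel_iff.1 h
    exacts [connRel_iff.2 (Or.inl rfl), connRel_iff.2 (Or.inr ⟨C, hC, hfC, heC⟩)]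
  trans h₁ h₂ := by
    obtain rfl | ⟨C₁, hC₁, heC₁, hfC₁⟩ := connRel_iff.1 h₁
    · exact h₂
    obtain rfl | ⟨C₂, hC₂, hfC₂, hgC₂⟩ := connRel_iff.1 h₂
    · exact h₁
    exact connRel_iff.2 (Or.inr (hC₁.exists_isCircuit_mem_mem hC₂ ⟨_, hfC₁, hfC₂⟩ heC₁ hgC₂))

def connSetoid (M : Matroid α) [M.Finitary] : Setoid α := ⟨ConnRel M, connRel_equivalence⟩

lemma connRel_of_isBase_exchange (hB : M.IsBase B) (he : e ∈ B) (hf : f ∉ B)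
    (hB' : M.IsBase (insert f (B \ {e}))) : ConnRel M e f :=
  connRel_iff.2 <| Or.inr <|
    (Matroid.exists_isCircuit_mem_mem_iff_exists_isBase_exchange (ne_of_mem_of_not_mem he hf)).2
      ⟨B, hB, he, hf, hB'⟩

variable [DecidableEq α]

lemma indicator_sub_indicator_exchange {K : Type*} [Ring K] (he : e ∈ B) (hf : f ∉ B) :
    (B.indicator 1 - (insert f (B \ {e})).indicator 1 : α → K) =
      Pi.single e 1 - Pi.single f 1 := by
  ext a
  by_cases hae : a = e <;> by_cases haf : a = f <;> by_cases haB : a ∈ B <;> simp_all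

lemma indicator_sub_indicator_mem_span [M.RankFinite] (hB : M.IsBase B) (hB' : M.IsBase B') :
    (B.indicator 1 - B'.indicator 1 : α → ℝ) ∈
      span ℝ (Setoid.classDiffs ℝ (connSetoid M) M.E) := by
  induction hn : (B \ B').ncard generalizing B with
  | zero =>
    rw [ncard_eq_zero hB.finite.sdiff, sdiff_eq_empty] at hn
    rw [hB.eq_of_subset_isBase hB' hn, sub_self]
    exact zero_mem _
  | succ n ih =>
    obtain ⟨e, he⟩ := nonempty_of_ncard_ne_zero (hn.trans_ne n.succ_ne_zero)
    obtain ⟨f, hf, hB₁⟩ := hB.exchange hB' he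
    have hn₁ : (insert f (B \ {e}) \ B').ncard = n := by
      rw [show insert f (B \ {e}) \ B' = (B \ B') \ {e} by ext; grind,
        ncard_sdiff_singleton_of_mem he, hn, Nat.add_sub_cancel]
    rw [← sub_add_sub_cancel _ ((insert f (B \ {e})).indicator 1)]
    refine add_mem (subset_span ⟨e, hB.subset_ground he.1, f,
      connRel_of_isBase_exchange hB he.1 hf.2 hB₁, indicator_sub_indicator_exchange he.1 hf.2⟩)
      (ih hB₁ hn₁)

lemma vectorSpan_baseConfig [M.RankFinite] :
    vectorSpan ℝ (baseConfig M) = span ℝ (Setoid.classDiffs ℝ (connSetoid M) M.E) := by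
  refine le_antisymm ?_ (span_le.2 ?_)
  · rw [vectorSpan_def, span_le]
    rintro _ ⟨_, ⟨B, hB, rfl⟩, _, ⟨B', hB', rfl⟩, rfl⟩
    exact indicator_sub_indicator_mem_span hB hB'
  · rintro _ ⟨e, -, f, hef, rfl⟩
    obtain rfl | hne := eq_or_ne e f
    · rw [sub_self]
      exact zero_mem _
    obtain ⟨B, hB, heB, hfB, hB'⟩ :=
      (Matroid.exists_isCircuit_mem_mem_iff_exists_isBase_exchange hne).1
        ((connRel_iff.1 hef).resolve_left hne)
    rw [← indicator_sub_indicator_exchange heB hfB]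
    exact vsub_mem_vectorSpan ℝ ⟨B, hB, rfl⟩ ⟨_, hB', rfl⟩

end Connectivity

/-- For a matroid `M` on a finite ground set, the smallest affine subspace
containing the base configuration `V_M` has dimension `|E| − c(M)`, where `c(M)` is the
number of connected components of `M`. -/
theorem finrank_affineSpan_baseConfig {α : Type} [Fintype α] (M : Matroid α) :
    Module.finrank ℝ (affineSpan ℝ (baseConfig M)).direction =
      M.E.ncard - numComponents M := by
  classical
  rw [direction_affineSpan, vectorSpan_baseConfig]
  exact Setoid.finrank_span_classDiffs fun e he f hef => ConnRel.mem_ground hef he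
end
end

section
/- Let M₁ = (E₁, 𝓑₁) and M₂ = (E₂, 𝓑₂) be matroids with E₁ ∩ E₂ = {p}, where p is not a coloop of both M₁ and M₂. Let E₁ ⊎ E₂ = (E₁ ∪ E₂ ∪ {p₁,p₂}) ∖ {p} be the disjoint union obtained by splitting p into two copies p₁, p₂, and let π : ℝ^{E₁⊎E₂} → ℝ^{E₁∪E₂} be the linear map sending the unit vectors of p₁ and p₂ both to the unit vector of p and fixing all other unit vectors. Then π restricts to a linear isomorphism from (P_{M₁} × P_{M₂}) ∩ {x ∈ ℝ^{E₁⊎E₂} : x_{p₁} + x_{p₂} ≤ 1} onto the base polytope P_{S(M₁,M₂)} of the series connection S(M₁,M₂). -/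
open MvPolynomial Set

noncomputable section

/-- `S` is the series connection of `M₁` and `M₂` (with respect to the common base point
`p` of their ground sets): its ground set is `E₁ ∪ E₂` and its bases are the disjoint
unions of a base of `M₁` and a base of `M₂`. -/
def IsSeriesConnection {γ : Type} (M₁ M₂ S : Matroid γ) : Prop :=
  S.E = M₁.E ∪ M₂.E ∧
    ∀ B, S.IsBase B ↔ ∃ B₁ B₂, M₁.IsBase B₁ ∧ M₂.IsBase B₂ ∧ B₁ ∩ B₂ = ∅ ∧ B = B₁ ∪ B₂

/-! The heart of the matter concerns linear forms `f`, `g` taking only the values 0 and 1 on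
`V` and `W`: cutting `conv V × conv W` by `f + g ≤ 1` gives the convex hull of the pairs of points
of `V × W` satisfying the cut.  Splitting `x ∈ conv V` as `f x • r + (1 - f x) • s` with
`r ∈ conv {f = 1}` and `s ∈ conv {f = 0}`, and similarly `y = g y • r' + (1 - g y) • s'`,
one has `(x, y) = f x • (r, s') + g y • (s, r') + (1 - f x - g y) • (s, s')`, a convex
combination of points of the cut hull.  For base polytopes, `(χ_{B₁}, χ_{B₂})` satisfies the
cut at `p` exactly when `B₁ ∩ B₂ = ∅`, so `+` maps these pairs onto the bases of the series
connection.  Injectivity: if `x₁ + x₂ = y₁ + y₂`, then `x₁ - y₁` vanishes outside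
`E₁ ∩ E₂ = {p}`, and its coordinate sum is `0` since every point of `P_{M₁}` has coordinate
sum the rank of `M₁`. -/

section Convex

variable {𝕜 E F ι : Type*} [Field 𝕜] [LinearOrder 𝕜] [IsStrictOrderedRing 𝕜]
  [AddCommGroup E] [Module 𝕜 E] [AddCommGroup F] [Module 𝕜 F]

theorem Convex.sum_mem_of_ne_zero {K : Set E} (hK : Convex 𝕜 K) {t : Finset ι} {w : ι → 𝕜}
    {z : ι → E} (h₀ : ∀ i ∈ t, 0 ≤ w i) (h₁ : ∑ i ∈ t, w i = 1)
    (hz : ∀ i ∈ t, w i ≠ 0 → z i ∈ K) : ∑ i ∈ t, w i • z i ∈ K := by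
  classical
  rw [← Finset.sum_filter_of_ne (p := fun i => w i ≠ 0) fun i _ h hw => h (by rw [hw, zero_smul])]
  refine hK.sum_mem (fun i hi => h₀ i (Finset.mem_filter.1 hi).1) ?_
    fun i hi => hz i (Finset.mem_filter.1 hi).1 (Finset.mem_filter.1 hi).2
  rwa [Finset.sum_filter_ne_zero]

theorem LinearMap.eq_of_mem_convexHull (f : E →ₗ[𝕜] 𝕜) {V : Set E} {c : 𝕜}
    (hV : ∀ v ∈ V, f v = c) {q : E} (hq : q ∈ convexHull 𝕜 V) : f q = c :=
  convexHull_min hV (convex_hyperplane f.isLinear c) hq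

theorem LinearMap.exists_eq_smul_add_smul_of_mem_convexHull (f : E →ₗ[𝕜] 𝕜) {V : Set E}
    (hV : ∀ v ∈ V, f v = 0 ∨ f v = 1) {q : E} (hq : q ∈ convexHull 𝕜 V) :
    0 ≤ f q ∧ ∃ r s, q = f q • r + (1 - f q) • s ∧
      (f q ≠ 0 → r ∈ convexHull 𝕜 {v ∈ V | f v = 1}) ∧
      (f q ≠ 1 → s ∈ convexHull 𝕜 {v ∈ V | f v = 0}) := by
  set V₁ := {v ∈ V | f v = 1}
  set V₀ := {v ∈ V | f v = 0}
  have hV₁₀ : V = V₁ ∪ V₀ := by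
    ext v
    refine ⟨fun hv => (hV v hv).elim (fun h => Or.inr ⟨hv, h⟩) fun h => Or.inl ⟨hv, h⟩, ?_⟩
    rintro (h | h) <;> exact h.1
  rcases V₁.eq_empty_or_nonempty with h₁ | h₁
  · rw [hV₁₀, h₁, empty_union] at hq
    have hq₀ : f q = 0 := f.eq_of_mem_convexHull (fun v hv => hv.2) hq
    exact ⟨hq₀.ge, q, q, by simp [hq₀], fun h => absurd hq₀ h, fun _ => hq⟩
  rcases V₀.eq_empty_or_nonempty with h₀ | h₀
  · rw [hV₁₀, h₀, union_empty] at hq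
    have hq₁ : f q = 1 := f.eq_of_mem_convexHull (fun v hv => hv.2) hq
    exact ⟨hq₁ ▸ zero_le_one, q, q, by simp [hq₁], fun _ => hq, fun h => absurd hq₁ h⟩
  rw [hV₁₀, convexHull_union h₁ h₀, mem_convexJoin] at hq
  obtain ⟨r, hr, s, hs, a, b, ha, -, hab, rfl⟩ := hq
  have hfq : f (a • r + b • s) = a := by
    simp [f.eq_of_mem_convexHull (fun v hv => hv.2) hr,
      f.eq_of_mem_convexHull (fun v hv => hv.2) hs]
  refine ⟨hfq.symm ▸ ha, r, s, ?_, fun _ => hr, fun _ => hs⟩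
  rw [hfq, ← hab, add_sub_cancel_left]

theorem mk_mem_convexHull_prod_inter_add_le_one (f : E →ₗ[𝕜] 𝕜) (g : F →ₗ[𝕜] 𝕜) {V : Set E}
    {W : Set F} (hV : ∀ v ∈ V, f v = 0 ∨ f v = 1) (hW : ∀ w ∈ W, g w = 0 ∨ g w = 1) {x : E}
    {y : F} (hx : x ∈ convexHull 𝕜 V) (hy : y ∈ convexHull 𝕜 W) (hxy : f x + g y ≤ 1) :
    (x, y) ∈ convexHull 𝕜 ((V ×ˢ W) ∩ {q | f q.1 + g q.2 ≤ 1}) := by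
  have mem (c d : 𝕜) (hcd : c + d ≤ 1) {u : E} {v : F}
      (hu : u ∈ convexHull 𝕜 {v ∈ V | f v = c}) (hv : v ∈ convexHull 𝕜 {w ∈ W | g w = d}) :
      (u, v) ∈ convexHull 𝕜 ((V ×ˢ W) ∩ {q | f q.1 + g q.2 ≤ 1}) := by
    refine convexHull_mono ?_ (mk_mem_convexHull_prod hu hv)
    rintro ⟨v₁, w₁⟩ ⟨⟨hv₁, rfl⟩, hw₁, rfl⟩
    exact ⟨⟨hv₁, hw₁⟩, hcd⟩
  obtain ⟨ha, r, s, hx', hr, hs⟩ := f.exists_eq_smul_add_smul_of_mem_convexHull hV hx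
  obtain ⟨hb, r', s', hy', hr', hs'⟩ := g.exists_eq_smul_add_smul_of_mem_convexHull hW hy
  set a := f x
  set b := g y
  have hcomb : (x, y) = ∑ i, ![a, b, 1 - a - b] i • ![(r, s'), (s, r'), (s, s')] i := by
    rw [Fin.sum_univ_three, hx', hy']
    ext <;> simp <;> module
  rw [hcomb]
  refine (convex_convexHull 𝕜 _).sum_mem_of_ne_zero ?_ (by simp [Fin.sum_univ_three]) ?_
  · intro i _
    fin_cases i <;> simp <;> linarith
  · intro i _ hi
    fin_cases i <;> simp only [Fin.zero_eta, Fin.mk_one, Fin.reduceFinMk, Fin.isValue,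
      Matrix.cons_val] at hi ⊢
    · exact mem 1 0 (by norm_num) (hr hi) (hs' fun hb₁ => hi (by linarith))
    · exact mem 0 1 (by norm_num) (hs fun ha₁ => hi (by linarith)) (hr' hi)
    · exact mem 0 0 (by norm_num) (hs fun ha₁ => hi (by linarith))
        (hs' fun hb₁ => hi (by linarith))

theorem convexHull_prod_inter_add_le_one (f : E →ₗ[𝕜] 𝕜) (g : F →ₗ[𝕜] 𝕜) {V : Set E}
    {W : Set F} (hV : ∀ v ∈ V, f v = 0 ∨ f v = 1) (hW : ∀ w ∈ W, g w = 0 ∨ g w = 1) :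
    (convexHull 𝕜 V ×ˢ convexHull 𝕜 W) ∩ {q | f q.1 + g q.2 ≤ 1} =
      convexHull 𝕜 ((V ×ˢ W) ∩ {q | f q.1 + g q.2 ≤ 1}) := by
  refine Subset.antisymm ?_ (convexHull_min ?_ ?_)
  · rintro ⟨x, y⟩ ⟨⟨hx, hy⟩, hxy⟩
    exact mk_mem_convexHull_prod_inter_add_le_one f g hV hW hx hy hxy
  · exact inter_subset_inter (prod_mono (subset_convexHull 𝕜 V) (subset_convexHull 𝕜 W))
      subset_rfl
  · exact ((convex_convexHull 𝕜 V).prod (convex_convexHull 𝕜 W)).inter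
      (convex_halfSpace_le (f.comp (LinearMap.fst 𝕜 E F) + g.comp (LinearMap.snd 𝕜 E F)).isLinear 1)

end Convex

section Matroid

variable {γ : Type}

theorem baseConfig_apply_eq_zero_or_one (M : Matroid γ) (p : γ) :
    ∀ x ∈ baseConfig M, x p = 0 ∨ x p = 1 := by
  rintro _ ⟨B, -, rfl⟩
  simpa using B.indicator_eq_zero_or_self (1 : γ → ℝ) p

theorem apply_eq_zero_of_mem_convexHull_baseConfig {M : Matroid γ} {q : γ → ℝ}
    (hq : q ∈ convexHull ℝ (baseConfig M)) {e : γ} (he : e ∉ M.E) : q e = 0 := by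
  refine (LinearMap.proj e : (γ → ℝ) →ₗ[ℝ] ℝ).eq_of_mem_convexHull ?_ hq
  rintro _ ⟨B, hB, rfl⟩
  exact indicator_of_notMem (fun h => he (hB.subset_ground h)) _

theorem sum_eq_ncard_of_mem_convexHull_baseConfig [Fintype γ] {M : Matroid γ} {B : Set γ}
    (hB : M.IsBase B) {q : γ → ℝ} (hq : q ∈ convexHull ℝ (baseConfig M)) :
    ∑ e, q e = B.ncard := by
  have := (∑ e, LinearMap.proj e : (γ → ℝ) →ₗ[ℝ] ℝ).eq_of_mem_convexHull (c := B.ncard) ?_ hq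
  · simpa using this
  rintro _ ⟨B', hB', rfl⟩
  rw [← hB'.ncard_eq_ncard_of_isBase hB]
  classical
  simp [indicator_apply, ncard_eq_toFinset_card']

theorem injOn_add_convexHull_baseConfig [Fintype γ] {M₁ M₂ : Matroid γ} {p : γ}
    (hE : M₁.E ∩ M₂.E = {p}) :
    InjOn (fun q : (γ → ℝ) × (γ → ℝ) => q.1 + q.2)
      (convexHull ℝ (baseConfig M₁) ×ˢ convexHull ℝ (baseConfig M₂)) := by
  rintro ⟨x₁, x₂⟩ ⟨hx₁, hx₂⟩ ⟨y₁, y₂⟩ ⟨hy₁, hy₂⟩ (h : x₁ + x₂ = y₁ + y₂)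
  dsimp only at hx₁ hx₂ hy₁ hy₂
  have hoff (e : γ) (he : e ≠ p) : x₁ e - y₁ e = 0 := by
    by_cases h₁ : e ∈ M₁.E
    · have h₂ : e ∉ M₂.E := fun h₂ => he <| by simpa [hE] using mem_inter h₁ h₂
      have := congrFun h e
      simp only [Pi.add_apply, apply_eq_zero_of_mem_convexHull_baseConfig hx₂ h₂,
        apply_eq_zero_of_mem_convexHull_baseConfig hy₂ h₂, add_zero] at this
      rw [this, sub_self]
    · simp [apply_eq_zero_of_mem_convexHull_baseConfig hx₁ h₁,
        apply_eq_zero_of_mem_convexHull_baseConfig hy₁ h₁]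
  obtain ⟨B, hB⟩ := M₁.exists_isBase
  have hp : x₁ p - y₁ p = 0 := by
    rw [← Finset.sum_eq_single_of_mem p (Finset.mem_univ p) fun e _ => hoff e,
      Finset.sum_sub_distrib, sum_eq_ncard_of_mem_convexHull_baseConfig hB hx₁,
      sum_eq_ncard_of_mem_convexHull_baseConfig hB hy₁, sub_self]
  obtain rfl : x₁ = y₁ := by
    ext e
    rw [← sub_eq_zero]
    by_cases he : e = p
    · exact he ▸ hp
    · exact hoff e he
  rw [add_left_cancel h]

theorem inter_eq_empty_iff_indicator_add_le_one {M₁ M₂ : Matroid γ} {p : γ}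
    (hE : M₁.E ∩ M₂.E = {p}) {B₁ B₂ : Set γ} (h₁ : B₁ ⊆ M₁.E) (h₂ : B₂ ⊆ M₂.E) :
    B₁ ∩ B₂ = ∅ ↔ B₁.indicator (1 : γ → ℝ) p + B₂.indicator 1 p ≤ 1 := by
  have hsub : B₁ ∩ B₂ ⊆ {p} := hE ▸ inter_subset_inter h₁ h₂
  by_cases hp : p ∈ B₁ ∩ B₂
  · simp [hp.1, hp.2, nonempty_iff_ne_empty.1 ⟨p, hp⟩]
  · have hempty : B₁ ∩ B₂ = ∅ :=
      eq_empty_of_forall_notMem fun e he => hp (mem_singleton_iff.1 (hsub he) ▸ he)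
    refine iff_of_true hempty ?_
    have hle (B : Set γ) : B.indicator (1 : γ → ℝ) p ≤ 1 :=
      indicator_apply_le' (fun _ => le_rfl) fun _ => zero_le_one
    rcases not_and_or.1 hp with h | h
    · rw [indicator_of_notMem h, zero_add]
      exact hle B₂
    · rw [indicator_of_notMem h, add_zero]
      exact hle B₁

theorem image_add_baseConfig_prod_inter {M₁ M₂ S : Matroid γ} {p : γ}
    (hE : M₁.E ∩ M₂.E = {p}) (hS : IsSeriesConnection M₁ M₂ S) :
    (fun q : (γ → ℝ) × (γ → ℝ) => q.1 + q.2) ''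
        ((baseConfig M₁ ×ˢ baseConfig M₂) ∩ {q | q.1 p + q.2 p ≤ 1}) = baseConfig S := by
  have indicator_union {B₁ B₂ : Set γ} (h : B₁ ∩ B₂ = ∅) :
      B₁.indicator (1 : γ → ℝ) + B₂.indicator 1 = (B₁ ∪ B₂).indicator 1 := by
    rw [indicator_union_of_disjoint (disjoint_iff_inter_eq_empty.2 h)]
    rfl
  ext x
  constructor
  · rintro ⟨⟨_, _⟩, ⟨⟨⟨B₁, hB₁, rfl⟩, ⟨B₂, hB₂, rfl⟩⟩, hp⟩, rfl⟩
    have hdisj := (inter_eq_empty_iff_indicator_add_le_one hE hB₁.subset_ground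
      hB₂.subset_ground).2 hp
    exact ⟨B₁ ∪ B₂, (hS.2 _).2 ⟨B₁, B₂, hB₁, hB₂, hdisj, rfl⟩, indicator_union hdisj⟩
  · rintro ⟨B, hB, rfl⟩
    obtain ⟨B₁, B₂, hB₁, hB₂, hdisj, rfl⟩ := (hS.2 B).1 hB
    exact ⟨(B₁.indicator 1, B₂.indicator 1), ⟨⟨⟨B₁, hB₁, rfl⟩, ⟨B₂, hB₂, rfl⟩⟩,
      (inter_eq_empty_iff_indicator_add_le_one hE hB₁.subset_ground hB₂.subset_ground).1 hdisj⟩,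
      indicator_union hdisj⟩

end Matroid

theorem basePolytope_series_connection_general {γ : Type} [Fintype γ]
    (M₁ M₂ S : Matroid γ) (p : γ) (hE : M₁.E ∩ M₂.E = {p})
    (hS : IsSeriesConnection M₁ M₂ S) :
    Set.InjOn (fun q : (γ → ℝ) × (γ → ℝ) => q.1 + q.2)
        ((convexHull ℝ (baseConfig M₁) ×ˢ convexHull ℝ (baseConfig M₂)) ∩
          {q | q.1 p + q.2 p ≤ 1}) ∧
      (fun q : (γ → ℝ) × (γ → ℝ) => q.1 + q.2) ''
          ((convexHull ℝ (baseConfig M₁) ×ˢ convexHull ℝ (baseConfig M₂)) ∩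
            {q | q.1 p + q.2 p ≤ 1}) =
        convexHull ℝ (baseConfig S) := by
  refine ⟨(injOn_add_convexHull_baseConfig hE).mono inter_subset_left, ?_⟩
  have hcut : (convexHull ℝ (baseConfig M₁) ×ˢ convexHull ℝ (baseConfig M₂)) ∩
      {q | q.1 p + q.2 p ≤ 1} =
        convexHull ℝ ((baseConfig M₁ ×ˢ baseConfig M₂) ∩ {q | q.1 p + q.2 p ≤ 1}) :=
    convexHull_prod_inter_add_le_one (LinearMap.proj p : (γ → ℝ) →ₗ[ℝ] ℝ)
      (LinearMap.proj p : (γ → ℝ) →ₗ[ℝ] ℝ)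
      (baseConfig_apply_eq_zero_or_one M₁ p) (baseConfig_apply_eq_zero_or_one M₂ p)
  rw [hcut, IsLinearMap.isLinearMap_add.image_convexHull, image_add_baseConfig_prod_inter hE hS]

/-- Let `M₁`, `M₂` be matroids whose ground sets intersect precisely in
the base point `p`, with `p` not a coloop of both, and let `S` be their series
connection.  Then the linear map `π` identifying the two copies `p₁, p₂` of `p` (realized
here as `(x, y) ↦ x + y` on `ℝ^{E₁⊎E₂} = ℝ^{E₁} × ℝ^{E₂}`) restricts to a linear
isomorphism from `(P_{M₁} × P_{M₂}) ∩ {x_{p₁} + x_{p₂} ≤ 1}` onto the base polytope of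
`S`. -/
theorem basePolytope_series_connection {γ : Type} [Fintype γ]
    (M₁ M₂ S : Matroid γ) (p : γ) (hE : M₁.E ∩ M₂.E = {p})
    (hp : ¬ ((∀ B, M₁.IsBase B → p ∈ B) ∧ ∀ B, M₂.IsBase B → p ∈ B))
    (hS : IsSeriesConnection M₁ M₂ S) :
    Set.InjOn (fun q : (γ → ℝ) × (γ → ℝ) => q.1 + q.2)
        ((convexHull ℝ (baseConfig M₁) ×ˢ convexHull ℝ (baseConfig M₂)) ∩
          {q | q.1 p + q.2 p ≤ 1}) ∧
      (fun q : (γ → ℝ) × (γ → ℝ) => q.1 + q.2) ''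
          ((convexHull ℝ (baseConfig M₁) ×ˢ convexHull ℝ (baseConfig M₂)) ∩
            {q | q.1 p + q.2 p ≤ 1}) =
        convexHull ℝ (baseConfig S) :=
  basePolytope_series_connection_general M₁ M₂ S p hE hS
end
end

section
/- Let M = (E, 𝓑) be a matroid of rank r. The vanishing ideal I(V_M) ⊆ ℝ[x_e : e ∈ E] of the base configuration V_M is generated by the polynomials x_e² − x_e for all e ∈ E, the polynomial (Σ_{e∈E} x_e) − r, and the squarefree monomials x^C = Π_{e∈C} x_e for all circuits C of M. -/
open MvPolynomial Set

noncomputable section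

open scoped Classical

/-- The generators `x_e² − x_e` (`e ∈ E`), `(Σ_{e∈E} x_e) − r`, and `x^C` (`C` a circuit)
for the vanishing ideal of the base configuration of a rank-`r` matroid. -/
noncomputable def matroidIdealGens {α : Type} [Fintype α] (M : Matroid α) (r : ℕ) :
    Set (MvPolynomial α ℝ) :=
  {g | ∃ e : α, g = X e ^ 2 - X e} ∪
    {(∑ e : α, X e) - C (r : ℝ)} ∪
    {g | ∃ Ci : Set α, IsCircuit M Ci ∧ g = ∏ e ∈ Finset.univ.filter (· ∈ Ci), X e}

/-! Modulo the Boolean ideal `⟨x_e² - x_e⟩`, which by the combinatorial Nullstellensatz is the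
vanishing ideal of the cube `{0,1}^E`, every polynomial is a combination of the indicator
polynomials `∏_{e ∈ S} x_e ∏_{e ∉ S} (1 - x_e)` of the cube points `χ_S`, so it suffices to put
the indicator polynomial of every non-base `S` into the ideal. If `S` is dependent it contains a
circuit `C`, and `x^C` divides that polynomial. If `S` is independent it is a proper subset of a
base, so `Σ x_e - r` takes the nonzero value `|S| - r` at `χ_S`; multiplying it by the indicator
polynomial of `S` gives, modulo the Boolean ideal, `|S| - r` times that polynomial. -/

namespace MvPolynomial

variable {σ R : Type*} [CommRing R]

variable (σ R) in
def booleanIdeal : Ideal (MvPolynomial σ R) :=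
  Ideal.span (Set.range fun i => X i ^ 2 - X i)

def cubeIndicator [Fintype σ] (S : Set σ) : MvPolynomial σ R :=
  ∏ i, if i ∈ S then X i else 1 - X i

theorem eval_indicator_cubeIndicator [Fintype σ] (S T : Set σ) :
    eval (T.indicator 1) (cubeIndicator S : MvPolynomial σ R) = if S = T then 1 else 0 := by
  rw [cubeIndicator, map_prod]
  split_ifs with hST
  · subst hST
    refine Finset.prod_eq_one fun i _ => ?_
    by_cases hi : i ∈ S <;> simp [hi]
  · obtain ⟨i, hi⟩ : ∃ i, ¬(i ∈ S ↔ i ∈ T) := by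
      by_contra! h
      exact hST (Set.ext h)
    refine Finset.prod_eq_zero (Finset.mem_univ i) ?_
    by_cases hS : i ∈ S <;> simp_all

theorem mem_booleanIdeal_of_forall_eval_indicator_eq_zero [IsDomain R] [Finite σ]
    {f : MvPolynomial σ R} (hf : ∀ S : Set σ, eval (S.indicator 1) f = 0) :
    f ∈ booleanIdeal σ R := by
  obtain ⟨c, -, rfl⟩ := combinatorial_nullstellensatz_exists_linearCombination
    (fun _ => {0, 1}) (fun _ => Finset.insert_nonempty _ _) f fun x hx => by
      convert hf {i | x i = 1}
      ext i
      rcases Finset.mem_insert.mp (hx i) with h | h <;> simp_all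
  have hP : (fun i : σ => ∏ r ∈ ({0, 1} : Finset R), (X i - C r)) = fun i => X i ^ 2 - X i := by
    ext1 i
    simp [sq, mul_sub]
  rw [hP, booleanIdeal, Ideal.span, ← Finsupp.range_linearCombination]
  exact LinearMap.mem_range_self _ c

theorem eval_indicator_sum_X [Fintype σ] (S : Set σ) :
    eval (S.indicator 1) (∑ i, X i : MvPolynomial σ R) = S.ncard := by
  simp [Set.indicator_apply, Finset.sum_boole, Set.ncard_eq_toFinset_card']

theorem mul_cubeIndicator_sub_mem_booleanIdeal [IsDomain R] [Fintype σ]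
    (g : MvPolynomial σ R) (S : Set σ) :
    g * cubeIndicator S - C (eval (S.indicator 1) g) * cubeIndicator S ∈ booleanIdeal σ R := by
  refine mem_booleanIdeal_of_forall_eval_indicator_eq_zero fun T => ?_
  rw [map_sub, map_mul, map_mul, eval_C, eval_indicator_cubeIndicator]
  split_ifs with hST
  · rw [hST, sub_self]
  · simp

theorem sub_sum_cubeIndicator_mem_booleanIdeal [IsDomain R] [Fintype σ] (f : MvPolynomial σ R) :
    f - ∑ S : Set σ, C (eval (S.indicator 1) f) * cubeIndicator S ∈ booleanIdeal σ R := by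
  refine mem_booleanIdeal_of_forall_eval_indicator_eq_zero fun T => ?_
  simp [eval_indicator_cubeIndicator]

theorem mem_of_booleanIdeal_le_of_cubeIndicator_mem [IsDomain R] [Fintype σ]
    {J : Ideal (MvPolynomial σ R)} (hJ : booleanIdeal σ R ≤ J) {f : MvPolynomial σ R}
    (hf : ∀ S : Set σ, eval (S.indicator 1) f ≠ 0 → cubeIndicator S ∈ J) : f ∈ J := by
  rw [← sub_add_cancel f (∑ S : Set σ, C (eval (S.indicator 1) f) * cubeIndicator S)]
  refine add_mem (hJ (sub_sum_cubeIndicator_mem_booleanIdeal f)) (sum_mem fun S _ => ?_)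
  by_cases hS : eval (S.indicator 1) f = 0
  · simp [hS]
  · exact J.mul_mem_left _ (hf S hS)

theorem cubeIndicator_mem_of_eval_ne_zero {K : Type*} [Field K] [Fintype σ]
    {J : Ideal (MvPolynomial σ K)} (hJ : booleanIdeal σ K ≤ J) {g : MvPolynomial σ K}
    (hg : g ∈ J) {S : Set σ} (hS : eval (S.indicator 1) g ≠ 0) : cubeIndicator S ∈ J := by
  have hC : C (eval (S.indicator 1) g) * cubeIndicator S ∈ J := by
    simpa using J.sub_mem (J.mul_mem_right (cubeIndicator S) hg)
      (hJ (mul_cubeIndicator_sub_mem_booleanIdeal g S))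
  simpa [← mul_assoc, ← C_mul, hS] using J.mul_mem_left (C (eval (S.indicator 1) g)⁻¹) hC

theorem prod_X_dvd_cubeIndicator [Fintype σ] {T S : Set σ} (hTS : T ⊆ S) :
    (∏ i ∈ Finset.univ.filter (· ∈ T), X i : MvPolynomial σ R) ∣ cubeIndicator S := by
  rw [cubeIndicator, ← Finset.prod_filter_mul_prod_filter_not Finset.univ (· ∈ T)]
  refine Dvd.intro _ (congrArg (· * _) (Finset.prod_congr rfl fun i hi => ?_))
  rw [if_pos (hTS (Finset.mem_filter.mp hi).2)]

end MvPolynomial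

theorem Matroid.IsCircuit.isCircuit {α : Type} {M : Matroid α} {C : Set α} (hC : M.IsCircuit C) :
    _root_.IsCircuit M C :=
  ⟨hC.dep, fun _ hD => (hC.ssubset_indep hD).not_dep⟩

section BaseConfig

variable {α : Type} [Fintype α] {M : Matroid α} {r : ℕ}

theorem span_matroidIdealGens_le_vanishingIdeal (hr : ∀ B, M.IsBase B → B.ncard = r) :
    Ideal.span (matroidIdealGens M r) ≤ vanishingIdeal ℝ (baseConfig M) := by
  rw [Ideal.span_le]
  rintro g hg _ ⟨B, hB, rfl⟩
  change eval (B.indicator 1) g = 0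
  rcases hg with (⟨e, rfl⟩ | rfl) | ⟨C, hC, rfl⟩
  · by_cases he : e ∈ B <;> simp [he]
  · rw [map_sub, eval_indicator_sum_X, eval_C, hr B hB, sub_self]
  · obtain ⟨e, heC, heB⟩ := not_subset.mp fun h => hC.1.not_indep (hB.indep.subset h)
    simp [Finset.prod_eq_zero (Finset.mem_filter.mpr ⟨Finset.mem_univ e, heC⟩), heB]

variable (M r) in
theorem booleanIdeal_le_span_matroidIdealGens :
    booleanIdeal α ℝ ≤ Ideal.span (matroidIdealGens M r) :=
  Ideal.span_mono (by rintro _ ⟨e, rfl⟩; exact Or.inl (Or.inl ⟨e, rfl⟩))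

theorem cubeIndicator_mem_span_matroidIdealGens (hE : M.E = Set.univ)
    (hr : ∀ B, M.IsBase B → B.ncard = r) {S : Set α} (hS : ¬ M.IsBase S) :
    cubeIndicator S ∈ Ideal.span (matroidIdealGens M r) := by
  by_cases hSi : M.Indep S
  · obtain ⟨B, hB, hSB⟩ := hSi.exists_isBase_superset
    have hlt : S.ncard < r :=
      hr B hB ▸ Set.ncard_lt_ncard (hSB.ssubset_of_ne (by rintro rfl; exact hS hB))
    refine cubeIndicator_mem_of_eval_ne_zero (booleanIdeal_le_span_matroidIdealGens M r)
      (Ideal.subset_span (Or.inl (Or.inr rfl))) ?_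
    rw [map_sub, eval_indicator_sum_X, eval_C, sub_ne_zero]
    exact_mod_cast hlt.ne
  · obtain ⟨C, hCS, hC⟩ := (M.dep_of_not_indep hSi (hE ▸ subset_univ S)).exists_isCircuit_subset
    exact Ideal.mem_of_dvd _ (prod_X_dvd_cubeIndicator hCS)
      (Ideal.subset_span (Or.inr ⟨C, hC.isCircuit, rfl⟩))

end BaseConfig

/-- For a matroid `M = (E, 𝓑)` of rank `r` (with `E` finite), the
vanishing ideal of the base configuration `V_M` is generated by the polynomials
`x_e² − x_e` for `e ∈ E`, the polynomial `(Σ_{e∈E} x_e) − r`, and the squarefree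
monomials `x^C` for the circuits `C` of `M`. -/
theorem vanishingIdeal_baseConfig_eq_span {α : Type} [Fintype α] (M : Matroid α) (r : ℕ)
    (hE : M.E = Set.univ) (hr : ∀ B, M.IsBase B → B.ncard = r) :
    MvPolynomial.vanishingIdeal ℝ (baseConfig M) = Ideal.span (matroidIdealGens M r) := by
  refine le_antisymm (fun f hf => ?_) (span_matroidIdealGens_le_vanishingIdeal hr)
  refine mem_of_booleanIdeal_le_of_cubeIndicator_mem
    (booleanIdeal_le_span_matroidIdealGens M r) fun S hS => ?_
  refine cubeIndicator_mem_span_matroidIdealGens hE hr fun hB => hS ?_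
  simpa using hf _ ⟨S, hB, rfl⟩
end
end

section
/- Every real 4×4 matrix H with H_{ii} = 0 for all i and H_{ij}² = 1 for all i ≠ j (i.e., zero diagonal and all off-diagonal entries equal to ±1) is nonsingular: det H ≠ 0. Equivalently, every Hadamard square root of the 4×4 matrix A₀ with zero diagonal and all off-diagonal entries 1 has rank 4, so Hrk(A₀) = 4. -/
/-!
A matrix with zero diagonal and `±1` off the diagonal has integer entries, and modulo 2 it is
`J - I = 1 + J` with `J` the all-ones matrix. By the matrix determinant lemma
`det (1 + J) = 1 + n`, which is `1` in `ZMod 2` when `n` is even; so the determinant is an odd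
integer, hence nonzero.
-/

open Matrix

theorem Matrix.det_one_add_of_one {n : Type*} [Fintype n] [DecidableEq n]
    (R : Type*) [CommRing R] :
    det (1 + of fun _ _ : n => (1 : R)) = 1 + (Fintype.card n : R) := by
  have hJ : (of fun _ _ : n => (1 : R)) =
      (replicateCol Unit (1 : n → R) * replicateRow Unit (1 : n → R) : Matrix n n R) := by
    ext i j
    simp [Matrix.mul_apply]
  rw [hJ, det_one_add_replicateCol_mul_replicateRow]
  simp

theorem ZMod.intCast_two_eq_one_of_sq_eq_one {x : ℤ} (hx : x ^ 2 = 1) : (x : ZMod 2) = 1 := by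
  rw [← ZMod.pow_card (x : ZMod 2), ← Int.cast_pow, hx, Int.cast_one]

theorem Matrix.map_intCast_zmod_two_of_offDiag_sq_eq_one {n : Type*} [DecidableEq n]
    {M : Matrix n n ℤ} (hdiag : ∀ i, M i i = 0) (hoff : ∀ i j, i ≠ j → M i j ^ 2 = 1) :
    M.map (Int.cast : ℤ → ZMod 2) = 1 + of fun _ _ => 1 := by
  ext i j
  rcases eq_or_ne i j with rfl | hij
  · simp only [map_apply, hdiag, Int.cast_zero, add_apply, one_apply_eq, of_apply]
    decide
  · simp [hij, ZMod.intCast_two_eq_one_of_sq_eq_one (hoff i j hij)]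

theorem Matrix.intCast_det_zmod_two_of_offDiag_sq_eq_one {n : Type*} [Fintype n]
    [DecidableEq n] (hn : Even (Fintype.card n)) {M : Matrix n n ℤ} (hdiag : ∀ i, M i i = 0)
    (hoff : ∀ i j, i ≠ j → M i j ^ 2 = 1) :
    (M.det : ZMod 2) = 1 := by
  rw [Int.cast_det, map_intCast_zmod_two_of_offDiag_sq_eq_one hdiag hoff, det_one_add_of_one,
    (ZMod.natCast_eq_zero_iff_even).2 hn, add_zero]

theorem Matrix.exists_map_intCast_eq_of_offDiag_sq_eq_one {n R : Type*} [Ring R]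
    [NoZeroDivisors R] {H : Matrix n n R} (hdiag : ∀ i, H i i = 0)
    (hoff : ∀ i j, i ≠ j → H i j ^ 2 = 1) :
    ∃ M : Matrix n n ℤ, M.map Int.cast = H := by
  have hentry : ∀ i j, ∃ k : ℤ, (k : R) = H i j := by
    intro i j
    rcases eq_or_ne i j with rfl | hij
    · exact ⟨0, by simp [hdiag]⟩
    · rcases sq_eq_one_iff.1 (hoff i j hij) with h | h
      · exact ⟨1, by simp [h]⟩
      · exact ⟨-1, by simp [h]⟩
  choose M hM using hentry
  exact ⟨of M, by ext i j; simp [hM]⟩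

theorem Matrix.det_ne_zero_of_offDiag_sq_eq_one {n R : Type*} [Fintype n] [DecidableEq n]
    [CommRing R] [IsDomain R] [CharZero R] (hn : Even (Fintype.card n)) {H : Matrix n n R}
    (hdiag : ∀ i, H i i = 0) (hoff : ∀ i j, i ≠ j → H i j ^ 2 = 1) :
    H.det ≠ 0 := by
  obtain ⟨M, rfl⟩ := exists_map_intCast_eq_of_offDiag_sq_eq_one hdiag hoff
  simp only [map_apply] at hdiag hoff
  have hMdiag : ∀ i, M i i = 0 := fun i => by exact_mod_cast hdiag i
  have hMoff : ∀ i j, i ≠ j → M i j ^ 2 = 1 := fun i j hij => by exact_mod_cast hoff i j hij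
  have hodd := intCast_det_zmod_two_of_offDiag_sq_eq_one hn hMdiag hMoff
  rw [← Int.cast_det, Int.cast_ne_zero]
  exact fun h => by simp [h] at hodd

/-- Every real `4 × 4` matrix with zero diagonal whose off-diagonal
entries are all `±1` is nonsingular.  Equivalently, every Hadamard square root of the
`4 × 4` matrix `A₀` with zero diagonal and off-diagonal entries `1` has rank `4`, i.e.
`Hrk(A₀) = 4`. -/
theorem det_ne_zero_of_hadamard_sqrt (H : Matrix (Fin 4) (Fin 4) ℝ)
    (hdiag : ∀ i, H i i = 0) (hoff : ∀ i j, i ≠ j → (H i j) ^ 2 = 1) :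
    H.det ≠ 0 :=
  det_ne_zero_of_offDiag_sq_eq_one (by decide) hdiag hoff
end
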